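/- arXiv:0710.5614 — 2 statements merged into one kernel-verified Lean document; each statement's English description precedes it below -/
import Mathlib

section
/- Let π be an irreducible generalized permutation of type (l,m) satisfying the convention, let ε ∈ {0,1}, and suppose R_ε(π) is defined. Then R_ε(π) is irreducible. -/
open Finset

/-- A generalized permutation of type `(l, m)`: a map from positions `1, …, l + m`
(the top line being positions `1, …, l` and the bottom line positions `l+1, …, l+m`)
to an alphabet `A`, such that every letter has exactly two preimages. -/
structure GenPerm (A : Type*) [DecidableEq A] where
  l : ℕ
  m : ℕ
  p : ℕ → A
  double : ∀ a : A, ((Finset.Icc 1 (l + m)).filter (fun i => p i = a)).card = 2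

namespace GenPerm

variable {A : Type*} [DecidableEq A]

/-- Total number of positions, `l + m = 2d`. -/
def size (π : GenPerm A) : ℕ := π.l + π.m

/-- The multiset of letters occupying positions `a, a+1, …, b`. -/
def seg (π : GenPerm A) (a b : ℕ) : Multiset A :=
  (Finset.Icc a b).val.map π.p

/-- `i` and `j` are the two positions of a common letter (i.e. `j = σ(i)` where `σ` is the
fixed-point-free involution associated to `π`). -/
def IsTwin (π : GenPerm A) (i j : ℕ) : Prop :=
  1 ≤ i ∧ i ≤ π.size ∧ 1 ≤ j ∧ j ≤ π.size ∧ i ≠ j ∧ π.p i = π.p j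

/-- The convention: some letter has both occurrences on the top line, and some letter has
both occurrences on the bottom line. -/
def Convention (π : GenPerm A) : Prop :=
  (∃ i j, π.IsTwin i j ∧ i ≤ π.l ∧ j ≤ π.l) ∧
  (∃ i j, π.IsTwin i j ∧ π.l < i ∧ π.l < j)

/-- `π` is reducible: it admits a decomposition with corners `A∪B`, `D∪B`, `A∪C`, `D∪C`
(for disjoint, not all empty, subsets `A,B,C,D` of the alphabet) such that (i) no corner is
empty, or (ii) exactly one corner is empty and it is a left one, or (iii) exactly two corners
are empty and they are both left or both right. -/
def Reducible (π : GenPerm A) : Prop :=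
  ∃ (As Bs Cs Ds : Finset A) (i1 i2 i3 i4 : ℕ),
    Disjoint As Bs ∧ Disjoint As Cs ∧ Disjoint As Ds ∧
    Disjoint Bs Cs ∧ Disjoint Bs Ds ∧ Disjoint Cs Ds ∧
    ¬(As = ∅ ∧ Bs = ∅ ∧ Cs = ∅ ∧ Ds = ∅) ∧
    i1 ≤ i2 ∧ i2 ≤ π.l ∧ π.l ≤ i3 ∧ i3 ≤ i4 ∧ i4 ≤ π.size ∧
    π.seg 1 i1 = As.val + Bs.val ∧
    π.seg (i2 + 1) π.l = Ds.val + Bs.val ∧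
    π.seg (π.l + 1) i3 = As.val + Cs.val ∧
    π.seg (i4 + 1) π.size = Ds.val + Cs.val ∧
    ((π.seg 1 i1 ≠ 0 ∧ π.seg (i2 + 1) π.l ≠ 0 ∧ π.seg (π.l + 1) i3 ≠ 0 ∧
        π.seg (i4 + 1) π.size ≠ 0) ∨
     (π.seg 1 i1 = 0 ∧ π.seg (i2 + 1) π.l ≠ 0 ∧ π.seg (π.l + 1) i3 ≠ 0 ∧
        π.seg (i4 + 1) π.size ≠ 0) ∨
     (π.seg 1 i1 ≠ 0 ∧ π.seg (i2 + 1) π.l ≠ 0 ∧ π.seg (π.l + 1) i3 = 0 ∧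
        π.seg (i4 + 1) π.size ≠ 0) ∨
     (π.seg 1 i1 = 0 ∧ π.seg (i2 + 1) π.l ≠ 0 ∧ π.seg (π.l + 1) i3 = 0 ∧
        π.seg (i4 + 1) π.size ≠ 0) ∨
     (π.seg 1 i1 ≠ 0 ∧ π.seg (i2 + 1) π.l = 0 ∧ π.seg (π.l + 1) i3 ≠ 0 ∧
        π.seg (i4 + 1) π.size = 0))

/-- `π` is irreducible if it is not reducible. -/
def Irreducible (π : GenPerm A) : Prop := ¬ π.Reducible

/-- `π` is strongly irreducible if every decomposition with corners `A∪B`, `D∪B`, `A∪C`,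
`D∪C` (for disjoint subsets) has all four corners empty. -/
def StronglyIrreducible (π : GenPerm A) : Prop :=
  ∀ (As Bs Cs Ds : Finset A) (i1 i2 i3 i4 : ℕ),
    Disjoint As Bs → Disjoint As Cs → Disjoint As Ds →
    Disjoint Bs Cs → Disjoint Bs Ds → Disjoint Cs Ds →
    i1 ≤ i2 → i2 ≤ π.l → π.l ≤ i3 → i3 ≤ i4 → i4 ≤ π.size →
    π.seg 1 i1 = As.val + Bs.val →
    π.seg (i2 + 1) π.l = Ds.val + Bs.val →
    π.seg (π.l + 1) i3 = As.val + Cs.val →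
    π.seg (i4 + 1) π.size = Ds.val + Cs.val →
    (π.seg 1 i1 = 0 ∧ π.seg (i2 + 1) π.l = 0 ∧ π.seg (π.l + 1) i3 = 0 ∧
      π.seg (i4 + 1) π.size = 0)

/-- `Σ_{j=1}^{k} ζ_{π(j)}` (partial sum along the top line). -/
noncomputable def topSum (π : GenPerm A) (ζ : A → ℂ) (k : ℕ) : ℂ := ∑ j ∈ Finset.Icc 1 k, ζ (π.p j)

/-- `Σ_{j=1}^{k} ζ_{π(l+j)}` (partial sum along the bottom line). -/
noncomputable def botSum (π : GenPerm A) (ζ : A → ℂ) (k : ℕ) : ℂ := ∑ j ∈ Finset.Icc 1 k, ζ (π.p (π.l + j))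

/-- Real version of `topSum`. -/
noncomputable def topSumR (π : GenPerm A) (τ : A → ℝ) (k : ℕ) : ℝ := ∑ j ∈ Finset.Icc 1 k, τ (π.p j)

/-- Real version of `botSum`. -/
noncomputable def botSumR (π : GenPerm A) (τ : A → ℝ) (k : ℕ) : ℝ := ∑ j ∈ Finset.Icc 1 k, τ (π.p (π.l + j))

/-- `ζ` is a suspension data for `π`. -/
def IsSuspension (π : GenPerm A) (ζ : A → ℂ) : Prop :=
  (∀ a, 0 < (ζ a).re) ∧
  (∀ i, 1 ≤ i → i ≤ π.l - 1 → 0 < (π.topSum ζ i).im) ∧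
  (∀ i, 1 ≤ i → i ≤ π.m - 1 → (π.botSum ζ i).im < 0) ∧
  π.topSum ζ π.l = π.botSum ζ π.m

/-- `τ` is a pseudo-suspension for `π`. -/
def IsPseudoSusp (π : GenPerm A) (τ : A → ℝ) : Prop :=
  (∀ k, 1 ≤ k → k ≤ π.l → 0 ≤ π.topSumR τ k) ∧
  (∀ k, 1 ≤ k → k ≤ π.m → π.botSumR τ k ≤ 0) ∧
  π.topSumR τ π.l = 0 ∧ π.botSumR τ π.m = 0

/-- `τ` is a strict pseudo-suspension for `π`: all the inequalities are strict except the
extremal ones. -/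
def IsStrictPseudoSusp (π : GenPerm A) (τ : A → ℝ) : Prop :=
  π.IsPseudoSusp τ ∧
  (∀ k, 1 ≤ k → k ≤ π.l - 1 → 0 < π.topSumR τ k) ∧
  (∀ k, 1 ≤ k → k ≤ π.m - 1 → π.botSumR τ k < 0)

/-- Number of occurrences of the letter `a` on the top line; so `a ∈ 𝒜₀ ↔ topCount = 2`,
`a ∈ 𝒜₁ ↔ topCount = 0`, and `a ∈ 𝒜₀₁ ↔ topCount = 1`. -/
def topCount (π : GenPerm A) (a : A) : ℕ :=
  ((Finset.Icc 1 π.l).filter (fun i => π.p i = a)).card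

end GenPerm

/-- `π'` is the result of applying the Rauzy operation `R₀` to `π` (this encodes, in
particular, that `R₀ π` is defined). -/
def IsR0 {A : Type*} [DecidableEq A] (π π' : GenPerm A) : Prop :=
  (∃ t, π.IsTwin π.l t ∧ π.l < t ∧ π.p π.l ≠ π.p π.size ∧
    π'.l = π.l ∧ π'.m = π.m ∧
    (∀ i, 1 ≤ i → i ≤ t → π'.p i = π.p i) ∧
    π'.p (t + 1) = π.p π.size ∧
    (∀ i, t + 1 < i → i ≤ π.size → π'.p i = π.p (i - 1)))
  ∨
  (∃ t, π.IsTwin π.l t ∧ t ≤ π.l ∧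
    (∃ x y, π.IsTwin x y ∧ π.l + 1 ≤ x ∧ x ≤ π.size - 1 ∧ π.l + 1 ≤ y ∧ y ≤ π.size - 1) ∧
    π'.l = π.l + 1 ∧ π'.m = π.m - 1 ∧
    (∀ i, 1 ≤ i → i < t → π'.p i = π.p i) ∧
    π'.p t = π.p π.size ∧
    (∀ i, t < i → i ≤ π.size → π'.p i = π.p (i - 1)))

/-- `π'` is the result of applying the Rauzy operation `R₁` to `π` (this encodes, in
particular, that `R₁ π` is defined). -/
def IsR1 {A : Type*} [DecidableEq A] (π π' : GenPerm A) : Prop :=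
  (∃ t, π.IsTwin π.size t ∧ t ≤ π.l ∧ π.p π.l ≠ π.p π.size ∧
    π'.l = π.l ∧ π'.m = π.m ∧
    π'.p (t + 1) = π.p π.l ∧
    (∀ i, t + 1 < i → i ≤ π.l → π'.p i = π.p (i - 1)) ∧
    (∀ i, 1 ≤ i → i ≤ π.size → (i ≤ t ∨ π.l < i) → π'.p i = π.p i))
  ∨
  (∃ t, π.IsTwin π.size t ∧ π.l < t ∧
    (∃ x y, π.IsTwin x y ∧ 1 ≤ x ∧ x ≤ π.l - 1 ∧ 1 ≤ y ∧ y ≤ π.l - 1) ∧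
    π'.l = π.l - 1 ∧ π'.m = π.m + 1 ∧
    (∀ i, π.l ≤ i → i < t - 1 → π'.p i = π.p (i + 1)) ∧
    π'.p (t - 1) = π.p π.l ∧
    (∀ i, 1 ≤ i → i ≤ π.size → (i < π.l ∨ t - 1 < i) → π'.p i = π.p i))

/-!
A reduction of `π' = R_ε π` transports back to one of `π`. For `R₀`, write `w = π(l)` and
`z = π(2d)`. When the twin of `w` is on the bottom line, the two occurrences of `w` in `π'`
force the inserted `z` to lie beyond the bottom-left corner and inside the bottom-right corner,
if there is one, so the same cut points cut out the same corners of `π`; the convention enters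
once, to see that the top-left corner is not the whole top line. When the twin of `w` is on the
top line, `z` sits in the top-left corner of `π'`; putting it back at the end of the bottom line
moves it to the bottom-right corner (from `A` to `C`, or from `B` to `D`), except when `π'` only
has left corners, where `{w}` and `{z}` become the two right corners of `π`. Finally `R₁` is
`R₀` conjugated by the exchange of the two lines, which preserves the convention and
reducibility.
-/

theorem Finset.val_eq_erase_add {α : Type*} [DecidableEq α] {s : Finset α} {z : α}
    (hz : z ∈ s) : s.val = (s.erase z).val + {z} := by
  rw [Finset.erase_val, add_comm, Multiset.singleton_add, Multiset.cons_erase hz]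

theorem Finset.insert_val_eq_add {α : Type*} [DecidableEq α] {s : Finset α} {z : α}
    (hz : z ∉ s) : (insert z s).val = s.val + {z} := by
  rw [Finset.insert_val_of_notMem hz, add_comm, Multiset.singleton_add]

namespace GenPerm

variable {A : Type*} [DecidableEq A] {π ρ : GenPerm A}

theorem seg_eq_zero_iff {a b : ℕ} : π.seg a b = 0 ↔ b < a := by
  simp [seg]

theorem mem_seg {a b : ℕ} {x : A} :
    x ∈ π.seg a b ↔ ∃ i, a ≤ i ∧ i ≤ b ∧ π.p i = x := by
  simp [seg, and_assoc]

theorem seg_self (a : ℕ) : π.seg a a = {π.p a} := by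
  simp [seg]

theorem seg_split {a b c : ℕ} (hac : a ≤ c + 1) (hcb : c ≤ b) :
    π.seg a b = π.seg a c + π.seg (c + 1) b := by
  have hdisj : Disjoint (Icc a c) (Icc (c + 1) b) := by
    simp only [Finset.disjoint_left, Finset.mem_Icc]
    omega
  have hunion : Icc a b = (Icc a c).disjUnion (Icc (c + 1) b) hdisj := by
    ext i
    simp only [Finset.mem_Icc, Finset.mem_disjUnion]
    omega
  simp only [seg, hunion, Finset.disjUnion_val, Multiset.map_add]

theorem seg_succ {a b : ℕ} (hab : a ≤ b + 1) :
    π.seg a (b + 1) = π.seg a b + {π.p (b + 1)} := by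
  rw [seg_split hab le_self_add, seg_self]

theorem seg_congr {a b : ℕ} (h : ∀ i, a ≤ i → i ≤ b → π.p i = ρ.p i) :
    π.seg a b = ρ.seg a b :=
  Multiset.map_congr rfl fun i hi => by
    rw [Finset.mem_val, Finset.mem_Icc] at hi
    exact h i hi.1 hi.2

theorem seg_add {a b : ℕ} (k : ℕ) (h : ∀ i, a ≤ i → i ≤ b → π.p (i + k) = ρ.p i) :
    π.seg (a + k) (b + k) = ρ.seg a b := by
  rw [seg, ← Finset.map_add_right_Icc, Finset.map_val, Multiset.map_map]
  exact Multiset.map_congr rfl fun i hi => by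
    rw [Finset.mem_val, Finset.mem_Icc] at hi
    exact h i hi.1 hi.2

theorem seg_insert {a b u : ℕ} {z : A} (hu : 1 ≤ u) (hau : a ≤ u) (hub : u ≤ b + 1)
    (hlow : ∀ i, a ≤ i → i < u → π.p i = ρ.p i) (hz : π.p u = z)
    (hhigh : ∀ i, u ≤ i → i ≤ b → π.p (i + 1) = ρ.p i) :
    π.seg a (b + 1) = ρ.seg a b + {z} := by
  have hπ : π.seg a (b + 1) = π.seg a (u - 1) + ({z} + π.seg (u + 1) (b + 1)) := by
    rw [seg_split (c := u - 1) (by omega) (by omega), Nat.sub_add_cancel hu,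
      seg_split (a := u) le_self_add hub, seg_self, hz]
  have hρ : ρ.seg a b = ρ.seg a (u - 1) + ρ.seg u b := by
    rw [seg_split (c := u - 1) (by omega) (by omega), Nat.sub_add_cancel hu]
  rw [hπ, hρ, seg_add 1 hhigh, seg_congr fun i h1 h2 => hlow i h1 (by omega)]
  abel

theorem IsTwin.symm {i j : ℕ} (h : π.IsTwin i j) : π.IsTwin j i := by
  obtain ⟨h1, h2, h3, h4, h5, h6⟩ := h
  exact ⟨h3, h4, h1, h2, h5.symm, h6.symm⟩

theorem IsTwin.unique {i j k : ℕ} (hj : π.IsTwin i j) (hk : π.IsTwin i k) : j = k := by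
  by_contra hjk
  obtain ⟨hi1, hi2, hj1, hj2, hij, hpj⟩ := hj
  obtain ⟨-, -, hk1, hk2, hik, hpk⟩ := hk
  have hsub : ({i, j, k} : Finset ℕ) ⊆ (Icc 1 (π.l + π.m)).filter (π.p · = π.p i) := by
    intro n hn
    simp only [Finset.mem_insert, Finset.mem_singleton] at hn
    simp only [Finset.mem_filter, Finset.mem_Icc]
    rcases hn with rfl | rfl | rfl
    · exact ⟨⟨hi1, hi2⟩, rfl⟩
    · exact ⟨⟨hj1, hj2⟩, hpj.symm⟩
    · exact ⟨⟨hk1, hk2⟩, hpk.symm⟩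
  have := Finset.card_le_card hsub
  rw [π.double, Finset.card_eq_three.2 ⟨i, j, k, hij, hik, hjk, rfl⟩] at this
  omega

theorem IsTwin.mem_Icc_of_mem_seg {i j a b : ℕ} (h : π.IsTwin i j) (hx : π.p i ∈ π.seg a b)
    (hi : i < a ∨ b < i) (ha : 1 ≤ a) (hb : b ≤ π.size) : a ≤ j ∧ j ≤ b := by
  obtain ⟨k, hak, hkb, hk⟩ := mem_seg.1 hx
  have hik : π.IsTwin i k := ⟨h.1, h.2.1, by omega, by omega, by omega, hk.symm⟩
  rw [h.unique hik]
  exact ⟨hak, hkb⟩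

/-- The data of `Reducible` without the conditions on empty corners. -/
structure Decomposition (π : GenPerm A) where
  As : Finset A
  Bs : Finset A
  Cs : Finset A
  Ds : Finset A
  i1 : ℕ
  i2 : ℕ
  i3 : ℕ
  i4 : ℕ
  disjoint_AB : Disjoint As Bs
  disjoint_AC : Disjoint As Cs
  disjoint_AD : Disjoint As Ds
  disjoint_BC : Disjoint Bs Cs
  disjoint_BD : Disjoint Bs Ds
  disjoint_CD : Disjoint Cs Ds
  i1_le_i2 : i1 ≤ i2
  i2_le : i2 ≤ π.l
  le_i3 : π.l ≤ i3
  i3_le_i4 : i3 ≤ i4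
  i4_le : i4 ≤ π.size
  topLeft : π.seg 1 i1 = As.val + Bs.val
  topRight : π.seg (i2 + 1) π.l = Ds.val + Bs.val
  botLeft : π.seg (π.l + 1) i3 = As.val + Cs.val
  botRight : π.seg (i4 + 1) π.size = Ds.val + Cs.val

namespace Decomposition

/-- The conditions (i)–(iii) of `Reducible` on the empty corners, read off the indices: both
right corners are nonempty, or only the two left corners are. -/
def IsReduction (D : π.Decomposition) : Prop :=
  (D.i2 < π.l ∧ D.i4 < π.size) ∨ (0 < D.i1 ∧ D.i2 = π.l ∧ π.l < D.i3 ∧ D.i4 = π.size)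

theorem chain (D : π.Decomposition) :
    D.i1 ≤ D.i2 ∧ D.i2 ≤ π.l ∧ π.l ≤ D.i3 ∧ D.i3 ≤ D.i4 ∧ D.i4 ≤ π.size :=
  ⟨D.i1_le_i2, D.i2_le, D.le_i3, D.i3_le_i4, D.i4_le⟩

theorem twin_of_topLeft (D : π.Decomposition) {q r : ℕ} (hq : 1 ≤ q) (hq' : q ≤ D.i1)
    (h : π.IsTwin q r) : D.i2 < r ∧ r ≤ D.i3 := by
  obtain ⟨_, _, _, _, _⟩ := D.chain
  have hx : π.p q ∈ D.As.val + D.Bs.val := D.topLeft ▸ mem_seg.2 ⟨q, hq, hq', rfl⟩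
  rcases Multiset.mem_add.1 hx with hA | hB
  · have := h.mem_Icc_of_mem_seg (by rw [D.botLeft]; exact Multiset.mem_add.2 (Or.inl hA))
      (by omega) (by omega) (by omega)
    omega
  · have := h.mem_Icc_of_mem_seg (by rw [D.topRight]; exact Multiset.mem_add.2 (Or.inr hB))
      (by omega) (by omega) (by omega)
    omega

theorem twin_of_topRight (D : π.Decomposition) {q r : ℕ} (hq : D.i2 < q) (hq' : q ≤ π.l)
    (h : π.IsTwin q r) : r ≤ D.i1 ∨ D.i4 < r := by
  obtain ⟨_, _, _, _, _⟩ := D.chain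
  have hx : π.p q ∈ D.Ds.val + D.Bs.val := D.topRight ▸ mem_seg.2 ⟨q, hq, hq', rfl⟩
  rcases Multiset.mem_add.1 hx with hD | hB
  · have := h.mem_Icc_of_mem_seg (by rw [D.botRight]; exact Multiset.mem_add.2 (Or.inl hD))
      (by omega) (by omega) le_rfl
    omega
  · have := h.mem_Icc_of_mem_seg (by rw [D.topLeft]; exact Multiset.mem_add.2 (Or.inr hB))
      (by omega) le_rfl (by omega)
    omega

theorem twin_of_botLeft (D : π.Decomposition) {q r : ℕ} (hq : π.l < q) (hq' : q ≤ D.i3)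
    (h : π.IsTwin q r) : r ≤ D.i1 ∨ D.i4 < r := by
  obtain ⟨_, _, _, _, _⟩ := D.chain
  have hx : π.p q ∈ D.As.val + D.Cs.val := D.botLeft ▸ mem_seg.2 ⟨q, hq, hq', rfl⟩
  rcases Multiset.mem_add.1 hx with hA | hC
  · have := h.mem_Icc_of_mem_seg (by rw [D.topLeft]; exact Multiset.mem_add.2 (Or.inl hA))
      (by omega) le_rfl (by omega)
    omega
  · have := h.mem_Icc_of_mem_seg (by rw [D.botRight]; exact Multiset.mem_add.2 (Or.inr hC))
      (by omega) (by omega) le_rfl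
    omega

/-- The top-left corner has no repeated letter, so it cannot be the whole top line. -/
theorem i1_lt (D : π.Decomposition) {i j : ℕ} (h : π.IsTwin i j) (hi : i ≤ π.l)
    (hj : j ≤ π.l) : D.i1 < π.l := by
  by_contra hl
  have := D.twin_of_topLeft h.1 (by omega) h
  have := D.i1_le_i2
  omega

theorem Bs_eq_empty (D : π.Decomposition) (h : D.i2 = π.l) : D.Bs = ∅ := by
  have := D.topRight
  rw [h, seg_eq_zero_iff.2 (Nat.lt_succ_self _), eq_comm, add_eq_zero] at this
  exact Finset.val_eq_zero.1 this.2

theorem Cs_eq_empty (D : π.Decomposition) (h : D.i4 = π.size) : D.Cs = ∅ := by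
  have := D.botRight
  rw [h, seg_eq_zero_iff.2 (Nat.lt_succ_self _), eq_comm, add_eq_zero] at this
  exact Finset.val_eq_zero.1 this.2

end Decomposition

theorem reducible_iff : π.Reducible ↔ ∃ D : π.Decomposition, D.IsReduction := by
  constructor
  · rintro ⟨As, Bs, Cs, Ds, i1, i2, i3, i4, dAB, dAC, dAD, dBC, dBD, dCD, -,
      h12, h2, h3, h34, h4, e1, e2, e3, e4, hP⟩
    refine ⟨⟨As, Bs, Cs, Ds, i1, i2, i3, i4, dAB, dAC, dAD, dBC, dBD, dCD,
      h12, h2, h3, h34, h4, e1, e2, e3, e4⟩, ?_⟩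
    simp only [ne_eq, seg_eq_zero_iff] at hP
    simp only [Decomposition.IsReduction]
    omega
  · rintro ⟨D, hD⟩
    obtain ⟨_, _, _, _, _⟩ := D.chain
    refine ⟨D.As, D.Bs, D.Cs, D.Ds, D.i1, D.i2, D.i3, D.i4, D.disjoint_AB, D.disjoint_AC,
      D.disjoint_AD, D.disjoint_BC, D.disjoint_BD, D.disjoint_CD, ?_, D.i1_le_i2, D.i2_le,
      D.le_i3, D.i3_le_i4, D.i4_le, D.topLeft, D.topRight, D.botLeft, D.botRight, ?_⟩
    · rintro ⟨hA, hB, -, hD'⟩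
      have h1 := D.topLeft
      have h2 := D.topRight
      simp only [hA, hB, hD', Finset.empty_val, add_zero, seg_eq_zero_iff] at h1 h2
      simp only [Decomposition.IsReduction] at hD
      omega
    · simp only [ne_eq, seg_eq_zero_iff]
      simp only [Decomposition.IsReduction] at hD
      omega

def Decomposition.ofCornersEq (D : ρ.Decomposition) (j1 j2 j3 j4 : ℕ)
    (hj : j1 ≤ j2 ∧ j2 ≤ π.l ∧ π.l ≤ j3 ∧ j3 ≤ j4 ∧ j4 ≤ π.size)
    (e1 : π.seg 1 j1 = ρ.seg 1 D.i1) (e2 : π.seg (j2 + 1) π.l = ρ.seg (D.i2 + 1) ρ.l)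
    (e3 : π.seg (π.l + 1) j3 = ρ.seg (ρ.l + 1) D.i3)
    (e4 : π.seg (j4 + 1) π.size = ρ.seg (D.i4 + 1) ρ.size) : π.Decomposition where
  __ := D
  i1 := j1
  i2 := j2
  i3 := j3
  i4 := j4
  i1_le_i2 := hj.1
  i2_le := hj.2.1
  le_i3 := hj.2.2.1
  i3_le_i4 := hj.2.2.2.1
  i4_le := hj.2.2.2.2
  topLeft := e1.trans D.topLeft
  topRight := e2.trans D.topRight
  botLeft := e3.trans D.botLeft
  botRight := e4.trans D.botRight

/-- The letter `z` leaves the top-left corner for the bottom-right one: from `As` it goes to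
`Cs`, from `Bs` to `Ds`. -/
theorem Decomposition.exists_move (D : ρ.Decomposition) {z : A} {j1 j2 j3 j4 : ℕ}
    (hj : j1 ≤ j2 ∧ j2 ≤ π.l ∧ π.l ≤ j3 ∧ j3 ≤ j4 ∧ j4 ≤ π.size)
    (e1 : π.seg 1 j1 + {z} = ρ.seg 1 D.i1) (e2 : π.seg (j2 + 1) π.l = ρ.seg (D.i2 + 1) ρ.l)
    (e3 : π.seg (π.l + 1) j3 = ρ.seg (ρ.l + 1) D.i3)
    (e4 : π.seg (j4 + 1) π.size = ρ.seg (D.i4 + 1) ρ.size + {z}) :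
    ∃ E : π.Decomposition, E.i1 = j1 ∧ E.i2 = j2 ∧ E.i3 = j3 ∧ E.i4 = j4 := by
  have hz : z ∈ D.As.val + D.Bs.val := by
    rw [← D.topLeft, ← e1]
    exact Multiset.mem_add.2 (Or.inr (Multiset.mem_singleton_self z))
  rcases Multiset.mem_add.1 hz with hzA | hzB
  · have hA := Finset.val_eq_erase_add hzA
    have hzC : z ∉ D.Cs := Finset.disjoint_left.1 D.disjoint_AC hzA
    refine ⟨⟨D.As.erase z, D.Bs, insert z D.Cs, D.Ds, j1, j2, j3, j4,
      D.disjoint_AB.mono_left (Finset.erase_subset _ _),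
      Finset.disjoint_insert_right.2 ⟨Finset.notMem_erase z _,
        D.disjoint_AC.mono_left (Finset.erase_subset _ _)⟩,
      D.disjoint_AD.mono_left (Finset.erase_subset _ _),
      Finset.disjoint_insert_right.2 ⟨Finset.disjoint_left.1 D.disjoint_AB hzA, D.disjoint_BC⟩,
      D.disjoint_BD,
      Finset.disjoint_insert_left.2 ⟨Finset.disjoint_left.1 D.disjoint_AD hzA, D.disjoint_CD⟩,
      hj.1, hj.2.1, hj.2.2.1, hj.2.2.2.1, hj.2.2.2.2, ?_, e2.trans D.topRight, ?_, ?_⟩,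
      rfl, rfl, rfl, rfl⟩
    · apply add_right_cancel (b := {z})
      rw [e1, D.topLeft, hA]
      abel
    · rw [e3, D.botLeft, hA, Finset.insert_val_eq_add hzC]
      abel
    · rw [e4, D.botRight, Finset.insert_val_eq_add hzC]
      abel
  · have hB := Finset.val_eq_erase_add hzB
    have hzD : z ∉ D.Ds := Finset.disjoint_left.1 D.disjoint_BD hzB
    refine ⟨⟨D.As, D.Bs.erase z, D.Cs, insert z D.Ds, j1, j2, j3, j4,
      D.disjoint_AB.mono_right (Finset.erase_subset _ _), D.disjoint_AC,
      Finset.disjoint_insert_right.2 ⟨fun h => Finset.disjoint_left.1 D.disjoint_AB h hzB,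
        D.disjoint_AD⟩,
      D.disjoint_BC.mono_left (Finset.erase_subset _ _),
      Finset.disjoint_insert_right.2 ⟨Finset.notMem_erase z _,
        D.disjoint_BD.mono_left (Finset.erase_subset _ _)⟩,
      Finset.disjoint_insert_right.2 ⟨Finset.disjoint_left.1 D.disjoint_BC hzB, D.disjoint_CD⟩,
      hj.1, hj.2.1, hj.2.2.1, hj.2.2.2.1, hj.2.2.2.2, ?_, ?_, e3.trans D.botLeft, ?_⟩,
      rfl, rfl, rfl, rfl⟩
    · apply add_right_cancel (b := {z})
      rw [e1, D.topLeft, hB]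
      abel
    · rw [e2, D.topRight, hB, Finset.insert_val_eq_add hzD]
      abel
    · rw [e4, D.botRight, Finset.insert_val_eq_add hzD]
      abel

/-- The first case of `R₀`: the twin `t` of `π.l` lies on the bottom line, and `ρ` is `π` with
the last letter moved to position `t + 1`. -/
structure RauzyZeroBot (π ρ : GenPerm A) (t : ℕ) : Prop where
  twin : π.IsTwin π.l t
  l_lt : π.l < t
  lt_size : t < π.size
  l_eq : ρ.l = π.l
  size_eq : ρ.size = π.size
  p_le : ∀ i, 1 ≤ i → i ≤ t → ρ.p i = π.p i
  p_succ_eq : ρ.p (t + 1) = π.p π.size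
  p_succ : ∀ i, t + 1 ≤ i → i < π.size → ρ.p (i + 1) = π.p i

/-- The second case of `R₀`: the twin `t` of `π.l` lies on the top line, and `ρ` is `π` with
the last letter moved to position `t` of the top line. -/
structure RauzyZeroTop (π ρ : GenPerm A) (t : ℕ) : Prop where
  twin : π.IsTwin π.l t
  lt_l : t < π.l
  l_eq : ρ.l = π.l + 1
  size_eq : ρ.size = π.size
  p_lt : ∀ i, 1 ≤ i → i < t → ρ.p i = π.p i
  p_eq : ρ.p t = π.p π.size
  p_succ : ∀ i, t ≤ i → i < π.size → ρ.p (i + 1) = π.p i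

theorem seg_eq_seg_of_lt {a b c d : ℕ} (hab : b < a) (hcd : d < c) : π.seg a b = ρ.seg c d :=
  (seg_eq_zero_iff.2 hab).trans (seg_eq_zero_iff.2 hcd).symm

theorem RauzyZeroBot.reducible_of_reducible {t : ℕ} (hR : RauzyZeroBot π ρ t)
    (hconv : ∃ i j, π.IsTwin i j ∧ i ≤ π.l ∧ j ≤ π.l) (hρ : ρ.Reducible) :
    π.Reducible := by
  obtain ⟨D, hD⟩ := reducible_iff.1 hρ
  obtain ⟨_, _, _, _, _⟩ := D.chain
  obtain ⟨⟨_, _, _, _, _, hpt⟩, _, _, hl, hs, hlow, hz, hhigh⟩ := hR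
  have hρt : ρ.IsTwin t ρ.l :=
    ⟨by omega, by omega, by omega, by omega, by omega, by rw [hl, hlow t (by omega) le_rfl,
      hlow π.l (by omega) (by omega), hpt]⟩
  have hi1 : D.i1 < ρ.l := by
    obtain ⟨i, j, ⟨hi, _, hj, _, hij, hp⟩, hil, hjl⟩ := hconv
    refine D.i1_lt (i := i) (j := j) ⟨hi, by omega, hj, by omega, hij, ?_⟩ (by omega) (by omega)
    rw [hlow i hi (by omega), hlow j hj (by omega), hp]
  have hi3 : D.i3 < t := by
    by_contra h3
    have := D.twin_of_botLeft (by omega) (not_lt.1 h3) hρt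
    omega
  -- the position `t + 1` of the moved letter is in the bottom-right corner, or that is empty
  have e4 : π.seg (D.i4 + 1) π.size = ρ.seg (D.i4 + 1) ρ.size := by
    rcases hD with ⟨h2, -⟩ | ⟨-, -, -, h4⟩
    · have := D.twin_of_topRight h2 le_rfl hρt.symm
      obtain ⟨n, hn⟩ : ∃ n, π.size = n + 1 := ⟨π.size - 1, by omega⟩
      have hins : ρ.seg (D.i4 + 1) (n + 1) = π.seg (D.i4 + 1) n + {π.p (n + 1)} :=
        seg_insert (u := t + 1) (by omega) (by omega) (by omega)
          (fun i _ _ => hlow i (by omega) (by omega)) (by rw [hz, hn])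
          (fun i h _ => hhigh i h (by omega))
      rw [hs, hn, hins, seg_succ (by omega)]
    · exact seg_eq_seg_of_lt (by omega) (by omega)
  refine reducible_iff.2 ⟨D.ofCornersEq D.i1 D.i2 D.i3 D.i4 (by omega)
    (seg_congr fun i _ _ => (hlow i (by omega) (by omega)).symm)
    (by rw [hl]; exact seg_congr fun i _ _ => (hlow i (by omega) (by omega)).symm)
    (by rw [hl]; exact seg_congr fun i _ _ => (hlow i (by omega) (by omega)).symm) e4, ?_⟩
  simp only [Decomposition.IsReduction, Decomposition.ofCornersEq] at hD ⊢
  omega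

theorem le_size (π : GenPerm A) : π.l ≤ π.size := Nat.le_add_right _ _

theorem RauzyZeroTop.isTwin {t : ℕ} (hR : RauzyZeroTop π ρ t) : ρ.IsTwin (t + 1) ρ.l := by
  obtain ⟨⟨_, _, _, _, _, hpt⟩, _, hl, hs, -, -, hhigh⟩ := hR
  have := ρ.le_size
  exact ⟨by omega, by omega, by omega, by omega, by omega,
    by rw [hl, hhigh t le_rfl (by omega), hhigh π.l (by omega) (by omega), hpt]⟩

theorem RauzyZeroTop.seg_botLeft {t : ℕ} (hR : RauzyZeroTop π ρ t) (D : ρ.Decomposition) :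
    π.seg (π.l + 1) (D.i3 - 1) = ρ.seg (ρ.l + 1) D.i3 := by
  obtain ⟨_, _, _, _, _⟩ := D.chain
  obtain ⟨-, _, hl, hs, -, -, hhigh⟩ := hR
  rw [hl, ← Nat.sub_add_cancel (show 1 ≤ D.i3 by omega),
    seg_add 1 fun i _ _ => hhigh i (by omega) (by omega), Nat.add_sub_cancel]

theorem reducible_of_lastLetters {S : Finset A} {k j : ℕ} (hk : k < π.l) (hj : π.l ≤ j)
    (hjs : j < π.size) (hw : π.p π.l ∉ S) (hz : π.p π.size ∉ S)
    (hwz : π.p π.l ≠ π.p π.size)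
    (e1 : π.seg 1 k = S.val + {π.p π.l}) (e3 : π.seg (π.l + 1) j = S.val + {π.p π.size}) :
    π.Reducible := by
  refine reducible_iff.2 ⟨⟨S, {π.p π.l}, {π.p π.size}, ∅, k, π.l - 1, j, π.size - 1,
    Finset.disjoint_singleton_right.2 hw, Finset.disjoint_singleton_right.2 hz,
    Finset.disjoint_empty_right _, Finset.disjoint_singleton.2 hwz, Finset.disjoint_empty_right _,
    Finset.disjoint_empty_right _, by omega, by omega, by omega, by omega, by omega,
    by rw [e1, Finset.singleton_val], ?_, by rw [e3, Finset.singleton_val], ?_⟩,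
    Or.inl ⟨Nat.sub_lt (by omega) one_pos, Nat.sub_lt (by omega) one_pos⟩⟩
  · rw [Nat.sub_add_cancel (by omega), seg_self, Finset.empty_val, zero_add, Finset.singleton_val]
  · rw [Nat.sub_add_cancel (by omega), seg_self, Finset.empty_val, zero_add, Finset.singleton_val]

theorem RauzyZeroTop.reducible_of_i1_eq {t : ℕ} (hR : RauzyZeroTop π ρ t)
    (D : ρ.Decomposition) (h1 : D.i1 = t) (h2 : D.i2 = ρ.l) (h3 : ρ.l < D.i3)
    (h4 : D.i4 = ρ.size) : π.Reducible := by
  obtain ⟨_, _, _, _, _⟩ := D.chain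
  have hρt := hR.isTwin
  have e3 := hR.seg_botLeft D
  obtain ⟨⟨_, _, _, _, _, hpt⟩, _, hl, hs, hlow, hz, hhigh⟩ := hR
  have hB := D.Bs_eq_empty h2
  have hC := D.Cs_eq_empty h4
  have hTL : ρ.seg 1 t = D.As.val := by rw [← h1, D.topLeft, hB, Finset.empty_val, add_zero]
  have hzA : π.p π.size ∈ D.As := by
    rw [← Finset.mem_val, ← hTL, ← hz]
    exact mem_seg.2 ⟨t, by omega, le_rfl, rfl⟩
  have hA := Finset.val_eq_erase_add hzA
  have hins : ρ.seg 1 (t - 1 + 1) = π.seg 1 (t - 1) + {π.p π.size} :=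
    seg_insert (u := t) (by omega) (by omega) (by omega) hlow hz
      (fun i h _ => hhigh i h (by omega))
  rw [Nat.sub_add_cancel (by omega), hTL, hA] at hins
  refine reducible_of_lastLetters (S := D.As.erase (π.p π.size)) (k := t) (j := D.i3 - 1)
    (by omega) (by omega) (by omega) ?_ (Finset.notMem_erase _ _) ?_ ?_
    (by rw [e3, D.botLeft, hC, Finset.empty_val, add_zero, hA])
  · intro hw
    have hx : ρ.p (t + 1) ∈ ρ.seg 1 t := by
      rw [hTL, hhigh t le_rfl (by omega), ← hpt]
      exact Finset.mem_of_mem_erase hw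
    have := hρt.mem_Icc_of_mem_seg hx (by omega) le_rfl (by omega)
    omega
  · intro hwz
    have htw : ρ.IsTwin (t + 1) t := ⟨by omega, by omega, by omega, by omega, by omega,
      by rw [hz, hhigh t le_rfl (by omega), ← hpt, hwz]⟩
    have := hρt.unique htw
    omega
  · rw [← Nat.sub_add_cancel (show 1 ≤ t by omega), seg_succ le_add_self,
      Nat.sub_add_cancel (by omega),
      add_right_cancel hins, ← hpt]

theorem RauzyZeroTop.reducible_of_reducible {t : ℕ} (hR : RauzyZeroTop π ρ t)
    (hρ : ρ.Reducible) : π.Reducible := by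
  obtain ⟨D, hD⟩ := reducible_iff.1 hρ
  obtain ⟨_, _, _, _, _⟩ := D.chain
  have hρt := hR.isTwin
  have e3 := hR.seg_botLeft D
  have ⟨⟨_, _, _, _, _, _⟩, _, hl, hs, hlow, hz, hhigh⟩ := hR
  rcases hD with ⟨h2, h4⟩ | ⟨h1, h2, h3, h4⟩
  · -- the twin of the last top position lies in the top-left corner, hence so does `t`
    have ht1 : t < D.i1 := by
      have := D.twin_of_topRight h2 le_rfl hρt.symm
      omega
    have e1 : π.seg 1 (D.i1 - 1) + {π.p π.size} = ρ.seg 1 D.i1 := by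
      rw [← Nat.sub_add_cancel (show 1 ≤ D.i1 by omega)]
      exact (seg_insert (u := t) (by omega) (by omega) (by omega) hlow hz
        (fun i h _ => hhigh i h (by omega))).symm
    have e2 : π.seg (D.i2 - 1 + 1) π.l = ρ.seg (D.i2 + 1) ρ.l := by
      rw [Nat.sub_add_cancel (by omega), hl]
      exact (seg_add 1 fun i _ _ => hhigh i (by omega) (by omega)).symm
    have e4 : π.seg (D.i4 - 1 + 1) π.size = ρ.seg (D.i4 + 1) ρ.size + {π.p π.size} := by
      obtain ⟨n, hn⟩ : ∃ n, π.size = n + 1 := ⟨π.size - 1, by omega⟩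
      rw [Nat.sub_add_cancel (by omega), hs, hn, seg_succ (by omega),
        seg_add 1 fun i _ _ => hhigh i (by omega) (by omega)]
    obtain ⟨E, hE1, hE2, hE3, hE4⟩ := D.exists_move (by omega) e1 e2 e3 e4
    exact reducible_iff.2 ⟨E, Or.inl (by omega)⟩
  · rcases lt_trichotomy D.i1 t with h | h | h
    · refine reducible_iff.2 ⟨D.ofCornersEq D.i1 π.l (D.i3 - 1) π.size (by omega)
        (seg_congr fun i _ _ => (hlow i (by omega) (by omega)).symm)
        (seg_eq_seg_of_lt (by omega) (by omega)) e3 (seg_eq_seg_of_lt (by omega) (by omega)),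
        Or.inr ⟨h1, rfl, (by omega : π.l < D.i3 - 1), rfl⟩⟩
    · exact hR.reducible_of_i1_eq D h h2 h3 h4
    · have := D.twin_of_topLeft (by omega) (by omega) hρt
      omega

theorem reducible_of_isR0 (hconv : π.Convention) (hR : IsR0 π ρ) (hρ : ρ.Reducible) :
    π.Reducible := by
  rcases hR with ⟨t, ht, hlt, hne, hl, hm, hlow, hz, hhigh⟩ |
    ⟨t, ht, htl, ⟨x, y, -, hx, hx', -, -⟩, hl, hm, hlow, hz, hhigh⟩
  · have hts : t < π.size := lt_of_le_of_ne ht.2.2.2.1 fun h => hne (h ▸ ht.2.2.2.2.2)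
    refine RauzyZeroBot.reducible_of_reducible
      ⟨ht, hlt, hts, hl, by simp only [size, hl, hm], hlow, hz,
      fun i h h' => ?_⟩ hconv.1 hρ
    simpa using hhigh (i + 1) (by omega) (by omega)
  · refine RauzyZeroTop.reducible_of_reducible ⟨ht, lt_of_le_of_ne htl ht.2.2.2.2.1.symm, hl,
      by simp only [size] at hx' ⊢; omega, hlow, hz, fun i h h' => ?_⟩ hρ
    simpa using hhigh (i + 1) (by omega) (by omega)

/-- `π` with its two lines exchanged. -/
def swap (π : GenPerm A) : GenPerm A where
  l := π.m
  m := π.l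
  p i := if i ≤ π.m then π.p (π.l + i) else π.p (i - π.m)
  double a := by
    rw [← π.double a]
    refine Finset.card_nbij' (fun i => if i ≤ π.m then π.l + i else i - π.m)
      (fun j => if j ≤ π.l then π.m + j else j - π.l) ?_ ?_ ?_ ?_ <;>
    · intro i hi
      simp only [Finset.coe_filter, Finset.mem_Icc, Set.mem_ofPred_eq] at hi ⊢
      split_ifs at hi ⊢ <;>
        first
          | omega
          | exact ⟨by omega, hi.2⟩
          | exact ⟨by omega, by rw [← hi.2]; congr 1; omega⟩

theorem swap_l (π : GenPerm A) : π.swap.l = π.m := rfl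

theorem swap_m (π : GenPerm A) : π.swap.m = π.l := rfl

theorem swap_size (π : GenPerm A) : π.swap.size = π.size := Nat.add_comm _ _

theorem swap_p_add {i : ℕ} (hi : 1 ≤ i) : π.swap.p (π.m + i) = π.p i := by
  simp only [swap, if_neg (show ¬π.m + i ≤ π.m by omega), Nat.add_sub_cancel_left]

theorem swap_p_sub {i : ℕ} (hi : π.l ≤ i) (hi' : i ≤ π.size) :
    π.swap.p (i - π.l) = π.p i := by
  simp only [swap, if_pos (show i - π.l ≤ π.m by unfold size at hi'; omega),
    Nat.add_sub_cancel' hi]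

theorem seg_swap_of_le {a b : ℕ} (hb : b ≤ π.m) :
    π.swap.seg a b = π.seg (a + π.l) (b + π.l) :=
  (seg_add π.l fun i _ _ => by
    rw [← swap_p_sub (π := π) (by omega) (by unfold size; omega), Nat.add_sub_cancel]).symm

theorem seg_swap_add {a b : ℕ} (ha : 1 ≤ a) : π.swap.seg (a + π.m) (b + π.m) = π.seg a b :=
  seg_add π.m fun i _ _ => by rw [add_comm, swap_p_add (by omega)]

/-- Exchanging the lines exchanges the two left corners and the two right corners, so `Bs`
and `Cs` trade places. -/
def Decomposition.swap (D : π.Decomposition) : π.swap.Decomposition where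
  As := D.As
  Bs := D.Cs
  Cs := D.Bs
  Ds := D.Ds
  i1 := D.i3 - π.l
  i2 := D.i4 - π.l
  i3 := π.m + D.i1
  i4 := π.m + D.i2
  disjoint_AB := D.disjoint_AC
  disjoint_AC := D.disjoint_AB
  disjoint_AD := D.disjoint_AD
  disjoint_BC := D.disjoint_BC.symm
  disjoint_BD := D.disjoint_CD
  disjoint_CD := D.disjoint_BD
  i1_le_i2 := Nat.sub_le_sub_right D.i3_le_i4 _
  i2_le := by have := D.i4_le; unfold size at this; show D.i4 - π.l ≤ π.m; omega
  le_i3 := Nat.le_add_right _ _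
  i3_le_i4 := Nat.add_le_add_left D.i1_le_i2 _
  i4_le := by have := D.i2_le; show π.m + D.i2 ≤ π.m + π.l; omega
  topLeft := by
    have := D.le_i3
    rw [seg_swap_of_le (by have := D.i3_le_i4; have := D.i4_le; unfold size at *; omega),
      Nat.sub_add_cancel this, add_comm, D.botLeft]
  topRight := by
    have := D.le_i3
    have := D.i3_le_i4
    show π.swap.seg (D.i4 - π.l + 1) π.m = _
    rw [seg_swap_of_le le_rfl, show D.i4 - π.l + 1 + π.l = D.i4 + 1 by omega,
      show π.m + π.l = π.size from Nat.add_comm _ _, D.botRight]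
  botLeft := by
    show π.swap.seg (π.m + 1) (π.m + D.i1) = _
    rw [add_comm π.m, add_comm π.m, seg_swap_add le_rfl, D.topLeft]
  botRight := by
    show π.swap.seg (π.m + D.i2 + 1) (π.m + π.l) = _
    rw [add_comm π.m, add_right_comm, add_comm π.m, seg_swap_add (by omega), D.topRight]

theorem Decomposition.IsReduction.swap {D : π.Decomposition} (hD : D.IsReduction) :
    D.swap.IsReduction := by
  have := D.chain
  unfold Decomposition.IsReduction at hD ⊢
  simp only [Decomposition.swap, swap_size]
  unfold size at *
  show (_ < π.m ∧ _) ∨ (_ ∧ _ = π.m ∧ π.m < _ ∧ _)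
  omega

theorem reducible_of_eqOn (hl : π.l = ρ.l) (hs : π.size = ρ.size)
    (h : ∀ i, 1 ≤ i → i ≤ π.size → π.p i = ρ.p i) (hπ : π.Reducible) :
    ρ.Reducible := by
  obtain ⟨D, hD⟩ := reducible_iff.1 hπ
  obtain ⟨_, _, _, _, _⟩ := D.chain
  refine reducible_iff.2 ⟨D.ofCornersEq D.i1 D.i2 D.i3 D.i4 (by omega)
    (seg_congr fun i _ _ => (h i (by omega) (by omega)).symm) ?_ ?_ ?_, ?_⟩
  · rw [← hl]
    exact seg_congr fun i _ _ => (h i (by omega) (by omega)).symm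
  · rw [← hl]
    exact seg_congr fun i _ _ => (h i (by omega) (by omega)).symm
  · rw [← hs]
    exact seg_congr fun i _ _ => (h i (by omega) (by omega)).symm
  · unfold Decomposition.IsReduction at hD
    rw [hl, hs] at hD
    exact hD

theorem swap_swap_p {i : ℕ} (hi : 1 ≤ i) (hi' : i ≤ π.size) : π.swap.swap.p i = π.p i := by
  rcases le_or_gt i π.l with h | h
  · exact (if_pos h).trans (swap_p_add hi)
  · exact (if_neg (not_le.2 h)).trans (swap_p_sub h.le hi')

theorem Reducible.swap (h : π.Reducible) : π.swap.Reducible := by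
  obtain ⟨D, hD⟩ := reducible_iff.1 h
  exact reducible_iff.2 ⟨D.swap, hD.swap⟩

theorem reducible_swap_iff : π.swap.Reducible ↔ π.Reducible :=
  ⟨fun h => reducible_of_eqOn (π := π.swap.swap) rfl rfl (fun _ hi hi' => swap_swap_p hi hi')
    h.swap, Reducible.swap⟩

theorem swap_p (i : ℕ) :
    π.swap.p i = if i ≤ π.m then π.p (π.l + i) else π.p (i - π.m) := rfl

theorem IsTwin.swap_add {i j : ℕ} (h : π.IsTwin i j) (hi : i ≤ π.l) (hj : j ≤ π.l) :
    π.swap.IsTwin (π.m + i) (π.m + j) := by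
  obtain ⟨h1, -, h3, -, hne, hp⟩ := h
  refine ⟨by omega, ?_, by omega, ?_, by omega, by rw [swap_p_add h1, swap_p_add h3, hp]⟩ <;>
    rw [swap_size] <;> unfold size <;> omega

theorem IsTwin.swap_sub {i j : ℕ} (h : π.IsTwin i j) (hi : π.l < i) (hj : π.l < j) :
    π.swap.IsTwin (i - π.l) (j - π.l) := by
  obtain ⟨-, h2, -, h4, hne, hp⟩ := h
  refine ⟨by omega, ?_, by omega, ?_, by omega,
    by rw [swap_p_sub hi.le h2, swap_p_sub hj.le h4, hp]⟩ <;>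
    rw [swap_size] <;> omega

theorem Convention.swap (h : π.Convention) : π.swap.Convention := by
  obtain ⟨⟨i, j, hij, hi, hj⟩, ⟨i', j', hij', hi', hj'⟩⟩ := h
  have := hij.1
  have := hij.2.2.1
  have : i' ≤ π.l + π.m := hij'.2.1
  have : j' ≤ π.l + π.m := hij'.2.2.2.1
  refine ⟨⟨i' - π.l, j' - π.l, hij'.swap_sub hi' hj', ?_, ?_⟩,
    ⟨π.m + i, π.m + j, hij.swap_add hi hj, ?_, ?_⟩⟩ <;> rw [swap_l] <;> omega

theorem swap_p_swap_l (π : GenPerm A) : π.swap.p π.swap.l = π.p π.size :=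
  if_pos le_rfl

theorem swap_p_swap_size (hl : 1 ≤ π.l) : π.swap.p π.swap.size = π.p π.l := by
  rw [swap_size, size, add_comm, swap_p_add hl]

theorem isR0_swap_of_twin_top {t : ℕ} (ht : π.IsTwin π.size t) (htl : t ≤ π.l)
    (hne : π.p π.l ≠ π.p π.size) (hl : ρ.l = π.l) (hm : ρ.m = π.m)
    (hz : ρ.p (t + 1) = π.p π.l) (hmid : ∀ i, t + 1 < i → i ≤ π.l → ρ.p i = π.p (i - 1))
    (hrest : ∀ i, 1 ≤ i → i ≤ π.size → (i ≤ t ∨ π.l < i) → ρ.p i = π.p i) :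
    IsR0 π.swap ρ.swap := by
  have hsize : π.size = π.l + π.m := rfl
  obtain ⟨-, -, ht1, -, -, hpt⟩ := ht
  have hm1 : 1 ≤ π.m := by
    by_contra h0
    exact hne (congrArg π.p (by omega))
  have hend := swap_p_swap_size (π := π) (by omega)
  refine Or.inl ⟨π.m + t, ⟨by rw [swap_l]; omega, by rw [swap_l, swap_size]; omega, by omega,
    by rw [swap_size]; omega, by rw [swap_l]; omega,
    by rw [swap_p_swap_l, swap_p_add ht1, hpt]⟩,
    by rw [swap_l]; omega, by rw [swap_p_swap_l, hend]; exact hne.symm,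
    by rw [swap_l, swap_l, hm], by rw [swap_m, swap_m, hl], fun i hi hi' => ?_, ?_,
    fun i hi hi' => ?_⟩
  · rw [swap_p, swap_p, hl, hm]
    split_ifs
    · exact hrest _ (by omega) (by omega) (Or.inr (by omega))
    · exact hrest _ (by omega) (by omega) (Or.inl (by omega))
  · rw [hend, add_assoc, ← hm, swap_p_add (by omega), hz]
  · rw [swap_size] at hi'
    rw [swap_p, swap_p, hl, hm, if_neg (by omega), if_neg (by omega),
      hmid _ (by omega) (by omega)]
    congr 1
    omega

theorem isR0_swap_of_twin_bot {t x y : ℕ} (ht : π.IsTwin π.size t) (hlt : π.l < t)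
    (hxy : π.IsTwin x y) (hx : 1 ≤ x) (hx' : x ≤ π.l - 1) (hy : 1 ≤ y) (hy' : y ≤ π.l - 1)
    (hl : ρ.l = π.l - 1) (hm : ρ.m = π.m + 1)
    (hmid : ∀ i, π.l ≤ i → i < t - 1 → ρ.p i = π.p (i + 1)) (hz : ρ.p (t - 1) = π.p π.l)
    (hrest : ∀ i, 1 ≤ i → i ≤ π.size → (i < π.l ∨ t - 1 < i) → ρ.p i = π.p i) :
    IsR0 π.swap ρ.swap := by
  have := ht.2.2.2.1
  have hsize : π.size = π.l + π.m := rfl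
  have htwin := ht.swap_sub (by omega) hlt
  rw [show π.size - π.l = π.swap.l by rw [swap_l]; omega] at htwin
  refine Or.inr ⟨t - π.l, htwin, by rw [swap_l]; omega,
    ⟨π.m + x, π.m + y, hxy.swap_add (by omega) (by omega), by rw [swap_l]; omega,
      by rw [swap_size]; omega, by rw [swap_l]; omega,
      by rw [swap_size]; omega⟩,
    by rw [swap_l, swap_l, hm], by rw [swap_m, swap_m, hl], fun i hi hi' => ?_, ?_,
    fun i hi hi' => ?_⟩
  · rw [swap_p, swap_p, hl, hm, if_pos (by omega), if_pos (by omega),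
      hmid _ (by omega) (by omega)]
    congr 1
    omega
  · rw [swap_p_swap_size (by omega), swap_p, hl, hm, if_pos (by omega), ← hz]
    congr 1
    omega
  · rw [swap_size] at hi'
    rw [swap_p, swap_p, hl, hm]
    split_ifs
    · rw [hrest _ (by omega) (by omega) (Or.inr (by omega))]
      congr 1
      omega
    · omega
    · omega
    · rw [hrest _ (by omega) (by omega) (Or.inl (by omega))]
      congr 1
      omega

theorem _root_.IsR1.swap (h : IsR1 π ρ) : IsR0 π.swap ρ.swap := by
  rcases h with ⟨t, ht, htl, hne, hl, hm, hz, hmid, hrest⟩ |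
    ⟨t, ht, hlt, ⟨x, y, hxy, hx, hx', hy, hy'⟩, hl, hm, hmid, hz, hrest⟩
  · exact isR0_swap_of_twin_top ht htl hne hl hm hz hmid hrest
  · exact isR0_swap_of_twin_bot ht hlt hxy hx hx' hy hy' hl hm hmid hz hrest

end GenPerm

/-- If `π` is an irreducible generalized permutation satisfying the
convention and `R_ε(π)` is defined (`ε ∈ {0,1}`), then `R_ε(π)` is irreducible. -/
theorem rauzy_preserves_irreducible {A : Type*} [DecidableEq A] (π : GenPerm A)
    (hconv : π.Convention) (h : π.Irreducible) (π' : GenPerm A)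
    (hstep : IsR0 π π' ∨ IsR1 π π') : π'.Irreducible := by
  intro hπ'
  rcases hstep with hR | hR
  · exact h (GenPerm.reducible_of_isR0 hconv hR hπ')
  · exact h (GenPerm.reducible_swap_iff.1
      (GenPerm.reducible_of_isR0 hconv.swap hR.swap (GenPerm.reducible_swap_iff.2 hπ')))
end

section
/- Let π be a generalized permutation of type (l,m), let ζ be a suspension data for π, and suppose Re ζ_{π(l)} ≠ Re ζ_{π(2d)}. Let ε = 0 if Re ζ_{π(l)} > Re ζ_{π(2d)} and ε = 1 otherwise, and suppose R_ε(π) is defined. Define ζ′ by: ζ′_{π(l)} = ζ_{π(l)} − ζ_{π(2d)} and ζ′_α = ζ_α for α ≠ π(l) when ε = 0; ζ′_{π(2d)} = ζ_{π(2d)} − ζ_{π(l)} and ζ′_α = ζ_α for α ≠ π(2d) when ε = 1. Then ζ′ is a suspension data for R_ε(π). -/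
open Finset





namespace RzAux

variable {A : Type*} [DecidableEq A]

lemma sum_shift (g : ℕ → ℂ) (a b : ℕ) :
    ∑ j ∈ Finset.Ioc (a+1) (b+1), g (j-1) = ∑ j ∈ Finset.Ioc a b, g j := by
  rw [← Finset.map_add_right_Ioc a b 1, Finset.sum_map]
  exact Finset.sum_congr rfl (fun j hj => by simp)

lemma sum_congr_Ioc {u v : ℕ → ℂ} {a k : ℕ}
    (h : ∀ j, a < j → j ≤ k → u j = v j) :
    ∑ j ∈ Finset.Ioc a k, u j = ∑ j ∈ Finset.Ioc a k, v j :=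
  Finset.sum_congr rfl (fun j hj => h j (Finset.mem_Ioc.1 hj).1 (Finset.mem_Ioc.1 hj).2)

lemma sum_three (u v : ℕ → ℂ) (c : ℂ) (a k : ℕ) (hak : a < k)
    (h1 : ∀ j, 0 < j → j ≤ a → u j = v j)
    (h2 : u (a+1) = c)
    (h3 : ∀ j, a+1 < j → j ≤ k → u j = v (j-1)) :
    ∑ j ∈ Finset.Ioc 0 k, u j
      = ∑ j ∈ Finset.Ioc 0 a, v j + c + ∑ j ∈ Finset.Ioc a (k-1), v j := by
  obtain ⟨b, rfl⟩ : ∃ b, k = b + 1 := ⟨k-1, by omega⟩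
  rw [← Finset.sum_Ioc_consecutive u (Nat.zero_le (a+1)) (by omega : a+1 ≤ b+1)]
  rw [Finset.sum_Ioc_succ_top (Nat.zero_le a) u, h2]
  have e1 : ∑ j ∈ Finset.Ioc 0 a, u j = ∑ j ∈ Finset.Ioc 0 a, v j :=
    sum_congr_Ioc (fun j hj1 hj2 => h1 j hj1 hj2)
  have e2 : ∑ j ∈ Finset.Ioc (a+1) (b+1), u j = ∑ j ∈ Finset.Ioc a b, v j := by
    rw [← sum_shift v a b]
    exact sum_congr_Ioc (fun j hj1 hj2 => h3 j hj1 hj2)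
  rw [e1, e2]
  simp

end RzAux
section RzAux2
variable {A : Type*} [DecidableEq A]

namespace GenPerm

lemma topSum_Ioc (π : GenPerm A) (ζ : A → ℂ) (k : ℕ) :
    π.topSum ζ k = ∑ j ∈ Finset.Ioc 0 k, ζ (π.p j) := rfl

lemma botSum_Ioc (π : GenPerm A) (ζ : A → ℂ) (k : ℕ) :
    π.botSum ζ k = ∑ j ∈ Finset.Ioc 0 k, ζ (π.p (π.l + j)) := rfl

lemma topSum_zero (π : GenPerm A) (ζ : A → ℂ) : π.topSum ζ 0 = 0 := by
  simp [topSum]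

lemma botSum_zero (π : GenPerm A) (ζ : A → ℂ) : π.botSum ζ 0 = 0 := by
  simp [botSum]

lemma topSum_pred (π : GenPerm A) (ζ : A → ℂ) {k : ℕ} (hk : 1 ≤ k) :
    π.topSum ζ k = π.topSum ζ (k-1) + ζ (π.p k) := by
  obtain ⟨j, rfl⟩ : ∃ j, k = j + 1 := ⟨k-1, by omega⟩
  rw [topSum_Ioc, topSum_Ioc, Finset.sum_Ioc_succ_top (Nat.zero_le _)]
  simp

lemma botSum_pred (π : GenPerm A) (ζ : A → ℂ) {k : ℕ} (hk : 1 ≤ k) :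
    π.botSum ζ k = π.botSum ζ (k-1) + ζ (π.p (π.l + k)) := by
  obtain ⟨j, rfl⟩ : ∃ j, k = j + 1 := ⟨k-1, by omega⟩
  rw [botSum_Ioc, botSum_Ioc, Finset.sum_Ioc_succ_top (Nat.zero_le _)]
  simp

lemma twin_filter (π : GenPerm A) {i j : ℕ} (h : π.IsTwin i j) :
    (Finset.Icc 1 π.size).filter (fun x => π.p x = π.p i) = {i, j} := by
  obtain ⟨h1, h2, h3, h4, h5, h6⟩ := h
  have hsub : ({i, j} : Finset ℕ) ⊆ (Finset.Icc 1 π.size).filter (fun x => π.p x = π.p i) := by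
    intro x hx
    simp only [Finset.mem_insert, Finset.mem_singleton] at hx
    rcases hx with rfl | rfl
    · exact Finset.mem_filter.2 ⟨Finset.mem_Icc.2 ⟨h1, h2⟩, rfl⟩
    · exact Finset.mem_filter.2 ⟨Finset.mem_Icc.2 ⟨h3, h4⟩, h6.symm⟩
  have hcard : ((Finset.Icc 1 π.size).filter (fun x => π.p x = π.p i)).card
      ≤ ({i, j} : Finset ℕ).card := by
    rw [Finset.card_insert_of_notMem (by simp [h5]), Finset.card_singleton]
    exact le_of_eq (π.double (π.p i))
  exact (Finset.eq_of_subset_of_card_le hsub hcard).symm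

lemma twin_ne (π : GenPerm A) {i j : ℕ} (h : π.IsTwin i j) {x : ℕ} (h1 : 1 ≤ x)
    (h2 : x ≤ π.size) (h3 : x ≠ i) (h4 : x ≠ j) : π.p x ≠ π.p i := by
  intro hx
  have hmem : x ∈ (Finset.Icc 1 π.size).filter (fun x => π.p x = π.p i) := by
    simp [Finset.mem_filter, Finset.mem_Icc, h1, h2, hx]
  rw [π.twin_filter h] at hmem
  simp only [Finset.mem_insert, Finset.mem_singleton] at hmem
  tauto

end GenPerm
end RzAux2
private lemma rauzy_R0 {A : Type*} [DecidableEq A] (π π' : GenPerm A) (ζ : A → ℂ)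
    (hζ : π.IsSuspension ζ)
    (hwin : (ζ (π.p π.size)).re < (ζ (π.p π.l)).re) (h : IsR0 π π') :
    π'.IsSuspension (Function.update ζ (π.p π.l) (ζ (π.p π.l) - ζ (π.p π.size))) := by
  obtain ⟨hpos, htop, hbot, heq⟩ := hζ
  have hsz : π.size = π.l + π.m := rfl
  set ζ' := Function.update ζ (π.p π.l) (ζ (π.p π.l) - ζ (π.p π.size)) with hzd
  have hre : ∀ a, 0 < (ζ' a).re := by
    intro a
    rcases eq_or_ne a (π.p π.l) with rfl | ha
    · rw [hzd, Function.update_self, Complex.sub_re]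
      linarith
    · rw [hzd, Function.update_of_ne ha]
      exact hpos a
  have hzw : ∀ {x : A}, x ≠ π.p π.l → ζ' x = ζ x := by
    intro x hx
    rw [hzd, Function.update_of_ne hx]
  have hT0 : ∀ k, k ≤ π.l - 1 → 0 ≤ (π.topSum ζ k).im := by
    intro k hk
    rcases Nat.eq_zero_or_pos k with rfl | hk1
    · simp [GenPerm.topSum_zero]
    · exact le_of_lt (htop k hk1 hk)
  have hB0 : ∀ k, k ≤ π.m - 1 → (π.botSum ζ k).im ≤ 0 := by
    intro k hk
    rcases Nat.eq_zero_or_pos k with rfl | hk1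
    · simp [GenPerm.botSum_zero]
    · exact le_of_lt (hbot k hk1 hk)
  -- complex identities valid in both subcases
  have iTl : π.topSum ζ π.l = π.topSum ζ (π.l - 1) + ζ (π.p π.l) := by
    rcases h with ⟨t, htwin, _⟩ | ⟨t, htwin, _⟩ <;> exact π.topSum_pred ζ htwin.1
  have iBm : π.botSum ζ π.m = π.botSum ζ (π.m - 1) + ζ (π.p π.size) := by
    have hm1 : 1 ≤ π.m := by
      by_contra hm
      have : π.size = π.l := by omega
      rcases h with ⟨t, htwin, hlt, _⟩ | ⟨t, htwin, hle, ⟨x, y, hxy, hx1, hx2, _⟩, _⟩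
      · have h4 := htwin.2.2.2.1
        omega
      · omega
    have c := π.botSum_pred ζ hm1
    rwa [show π.l + π.m = π.size from rfl] at c
  rcases h with ⟨t, htwin, hlt, hne, hl', hm', hA, hB, hC⟩ |
    ⟨t, htwin, hle, ⟨x, y, hxy, hx1, hx2, hy1, hy2⟩, hl', hm', hA, hB, hC⟩
  · -- R0, same type: σ(l) = t > l
    have q1 : 1 ≤ π.l := htwin.1
    have q4 : t ≤ π.size := htwin.2.2.2.1
    have q6 : π.p π.l = π.p t := htwin.2.2.2.2.2
    have hnw : ∀ x, 1 ≤ x → x ≤ π.size → x ≠ π.l → x ≠ t → π.p x ≠ π.p π.l :=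
      fun x a b c d => π.twin_ne htwin a b c d
    have hts : t < π.size := by
      rcases eq_or_lt_of_le q4 with h' | h'
      · exact absurd (h' ▸ q6) hne
      · exact h'
    have hs1 : π.l + 1 ≤ t := by omega
    set s := t - π.l with hsdef
    have hss : t = π.l + s := by omega
    have hsm : 1 ≤ s ∧ s ≤ π.m - 1 := by omega
    -- the partial bottom sum up to the twin position
    have hP : ∑ j ∈ Finset.Ioc 0 s, ζ' (π'.p (π.l + j))
        = π.botSum ζ (s - 1) + (ζ (π.p π.l) - ζ (π.p π.size)) := by
      obtain ⟨s1, hs1'⟩ : ∃ s1, s = s1 + 1 := ⟨s - 1, by omega⟩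
      rw [hs1', Finset.sum_Ioc_succ_top (Nat.zero_le _)]
      have e1 : ∑ j ∈ Finset.Ioc 0 s1, ζ' (π'.p (π.l + j))
          = ∑ j ∈ Finset.Ioc 0 s1, ζ (π.p (π.l + j)) := by
        refine RzAux.sum_congr_Ioc (fun j hj1 hj2 => ?_)
        rw [hA (π.l + j) (by omega) (by omega)]
        exact hzw (hnw (π.l + j) (by omega) (by omega) (by omega) (by omega))
      have e2 : π'.p (π.l + (s1 + 1)) = π.p π.l := by
        rw [hA (π.l + (s1 + 1)) (by omega) (by omega), show π.l + (s1 + 1) = t from by omega]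
        exact q6.symm
      rw [e1, e2, hzd, Function.update_self, GenPerm.botSum_Ioc]
      rw [show s1 + 1 - 1 = s1 from by omega]
    -- full bottom sums beyond the twin position
    have hQ : ∀ k, s < k → k ≤ π.m →
        ∑ j ∈ Finset.Ioc 0 k, ζ' (π'.p (π.l + j)) = π.botSum ζ (k - 1) := by
      intro k hks hkm
      have h3sum := RzAux.sum_three (fun j => ζ' (π'.p (π.l + j))) (fun j => ζ' (π.p (π.l + j)))
        (ζ (π.p π.size)) s k hks
        (fun j hj1 hj2 => by
          show ζ' (π'.p (π.l + j)) = ζ' (π.p (π.l + j))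
          rw [hA (π.l + j) (by omega) (by omega)])
        (by
          show ζ' (π'.p (π.l + (s + 1))) = ζ (π.p π.size)
          rw [show π.l + (s + 1) = t + 1 from by omega, hB]
          exact hzw (Ne.symm hne))
        (fun j hj1 hj2 => by
          show ζ' (π'.p (π.l + j)) = ζ' (π.p (π.l + (j - 1)))
          rw [hC (π.l + j) (by omega) (by omega), show π.l + j - 1 = π.l + (j - 1) from by omega])
      rw [h3sum]
      have e1 : ∑ j ∈ Finset.Ioc 0 s, ζ' (π.p (π.l + j))
          = ∑ j ∈ Finset.Ioc 0 s, ζ' (π'.p (π.l + j)) := by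
        refine RzAux.sum_congr_Ioc (fun j hj1 hj2 => ?_)
        rw [hA (π.l + j) (by omega) (by omega)]
      have e3 : ∑ j ∈ Finset.Ioc s (k - 1), ζ' (π.p (π.l + j))
          = ∑ j ∈ Finset.Ioc s (k - 1), ζ (π.p (π.l + j)) := by
        refine RzAux.sum_congr_Ioc (fun j hj1 hj2 => ?_)
        exact hzw (hnw (π.l + j) (by omega) (by omega) (by omega) (by omega))
      have e4 : π.botSum ζ s + ∑ j ∈ Finset.Ioc s (k - 1), ζ (π.p (π.l + j))
          = π.botSum ζ (k - 1) := by
        rw [GenPerm.botSum_Ioc, GenPerm.botSum_Ioc]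
        exact Finset.sum_Ioc_consecutive _ (Nat.zero_le s) (by omega)
      have e5 : π.botSum ζ s = π.botSum ζ (s - 1) + ζ (π.p π.l) := by
        have c := π.botSum_pred ζ (show 1 ≤ s from hsm.1)
        rwa [show π.l + s = t from hss.symm, ← q6] at c
      rw [e1, hP, e3]
      linear_combination e4 - e5
    refine ⟨hre, ?_, ?_, ?_⟩
    · intro k hk1 hk2
      rw [hl'] at hk2
      rw [GenPerm.topSum_Ioc]
      have e : ∑ j ∈ Finset.Ioc 0 k, ζ' (π'.p j) = ∑ j ∈ Finset.Ioc 0 k, ζ (π.p j) := by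
        refine RzAux.sum_congr_Ioc (fun j hj1 hj2 => ?_)
        rw [hA j hj1 (by omega)]
        exact hzw (hnw j hj1 (by omega) (by omega) (by omega))
      rw [e]
      exact htop k hk1 hk2
    · intro k hk1 hk2
      rw [hm'] at hk2
      rw [GenPerm.botSum_Ioc, hl']
      rcases lt_trichotomy k s with hks | hks | hks
      · have e : ∑ j ∈ Finset.Ioc 0 k, ζ' (π'.p (π.l + j))
            = ∑ j ∈ Finset.Ioc 0 k, ζ (π.p (π.l + j)) := by
          refine RzAux.sum_congr_Ioc (fun j hj1 hj2 => ?_)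
          rw [hA (π.l + j) (by omega) (by omega)]
          exact hzw (hnw (π.l + j) (by omega) (by omega) (by omega) (by omega))
        rw [e]
        exact hbot k hk1 (by omega)
      · rw [hks, hP]
        have i1 : (π.botSum ζ s).im = (π.botSum ζ (s - 1)).im + (ζ (π.p π.l)).im := by
          have c := π.botSum_pred ζ (show 1 ≤ s from hsm.1)
          rw [show π.l + s = t from by omega, ← q6] at c
          rw [c, Complex.add_im]
        have i2 : (π.botSum ζ π.m).im = (π.botSum ζ (π.m - 1)).im + (ζ (π.p π.size)).im := by
          rw [iBm, Complex.add_im]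
        have i3 : (π.topSum ζ π.l).im = (π.topSum ζ (π.l - 1)).im + (ζ (π.p π.l)).im := by
          rw [iTl, Complex.add_im]
        have i4 := congrArg Complex.im heq
        have s1 : (π.botSum ζ (s - 1)).im ≤ 0 := hB0 (s - 1) (by omega)
        have s2 : (π.botSum ζ (π.m - 1)).im < 0 := hbot (π.m - 1) (by omega) le_rfl
        have s3 : 0 ≤ (π.topSum ζ (π.l - 1)).im := hT0 (π.l - 1) (by omega)
        simp only [Complex.add_im, Complex.sub_im]
        linarith
      · rw [hQ k hks (by omega)]
        exact hbot (k - 1) (by omega) (by omega)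
    · rw [GenPerm.topSum_Ioc, GenPerm.botSum_Ioc, hl', hm']
      have eb : ∑ j ∈ Finset.Ioc 0 π.m, ζ' (π'.p (π.l + j)) = π.botSum ζ (π.m - 1) :=
        hQ π.m (by omega) le_rfl
      obtain ⟨l1, hl1⟩ : ∃ l1, π.l = l1 + 1 := ⟨π.l - 1, by omega⟩
      rw [eb, hl1, Finset.sum_Ioc_succ_top (Nat.zero_le _)]
      have e1 : ∑ j ∈ Finset.Ioc 0 l1, ζ' (π'.p j) = ∑ j ∈ Finset.Ioc 0 l1, ζ (π.p j) := by
        refine RzAux.sum_congr_Ioc (fun j hj1 hj2 => ?_)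
        rw [hA j hj1 (by omega)]
        exact hzw (hnw j hj1 (by omega) (by omega) (by omega))
      have e2 : π'.p (l1 + 1) = π.p π.l := by
        rw [hA (l1 + 1) (by omega) (by omega), hl1]
      rw [e1, e2, hzd, Function.update_self]
      have e3 : π.topSum ζ (π.l - 1) = ∑ j ∈ Finset.Ioc 0 l1, ζ (π.p j) := by
        rw [GenPerm.topSum_Ioc, show π.l - 1 = l1 from by omega]
      rw [← e3]
      linear_combination heq - iTl + iBm
  · -- R0, type change : σ(l) = t ≤ l
    have q1 : 1 ≤ π.l := htwin.1
    have q3 : 1 ≤ t := htwin.2.2.1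
    have q5 : π.l ≠ t := htwin.2.2.2.2.1
    have q6 : π.p π.l = π.p t := htwin.2.2.2.2.2
    have ht : t ≤ π.l - 1 := by omega
    have hm2 : 2 ≤ π.m := by omega
    have hnw : ∀ x, 1 ≤ x → x ≤ π.size → x ≠ π.l → x ≠ t → π.p x ≠ π.p π.l :=
      fun x a b c d => π.twin_ne htwin a b c d
    have hzwne : π.p π.size ≠ π.p π.l := hnw π.size (by omega) le_rfl (by omega) (by omega)
    have itt : π.topSum ζ t = π.topSum ζ (t - 1) + ζ (π.p π.l) := by
      have c := π.topSum_pred ζ q3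
      rwa [← q6] at c
    have hTk : ∀ k, k < t → ∑ j ∈ Finset.Ioc 0 k, ζ' (π'.p j) = π.topSum ζ k := by
      intro k hk
      refine RzAux.sum_congr_Ioc (fun j hj1 hj2 => ?_)
      rw [hA j hj1 (by omega)]
      exact hzw (hnw j hj1 (by omega) (by omega) (by omega))
    have hU : ∀ k, t ≤ k → k ≤ π.l + 1 → ∑ j ∈ Finset.Ioc 0 k, ζ' (π'.p j)
        = π.topSum ζ (t - 1) + ζ (π.p π.size) + ∑ j ∈ Finset.Ioc (t - 1) (k - 1), ζ' (π.p j) := by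
      intro k hkt hkl
      have h3sum := RzAux.sum_three (fun j => ζ' (π'.p j)) (fun j => ζ' (π.p j))
        (ζ (π.p π.size)) (t - 1) k (by omega)
        (fun j hj1 hj2 => by
          show ζ' (π'.p j) = ζ' (π.p j)
          rw [hA j hj1 (by omega)])
        (by
          show ζ' (π'.p (t - 1 + 1)) = ζ (π.p π.size)
          rw [show t - 1 + 1 = t from by omega, hB]
          exact hzw hzwne)
        (fun j hj1 hj2 => by
          show ζ' (π'.p j) = ζ' (π.p (j - 1))
          rw [hC j (by omega) (by omega)])
      rw [h3sum]
      have e1 : ∑ j ∈ Finset.Ioc 0 (t - 1), ζ' (π.p j) = π.topSum ζ (t - 1) := by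
        refine RzAux.sum_congr_Ioc (fun j hj1 hj2 => ?_)
        exact hzw (hnw j hj1 (by omega) (by omega) (by omega))
      rw [e1]
    have hsing : ∑ j ∈ Finset.Ioc (t - 1) t, ζ' (π.p j)
        = ζ (π.p π.l) - ζ (π.p π.size) := by
      obtain ⟨t1, ht1⟩ : ∃ t1, t = t1 + 1 := ⟨t - 1, by omega⟩
      subst ht1
      rw [Nat.add_sub_cancel, Finset.sum_Ioc_succ_top le_rfl, Finset.Ioc_self,
        Finset.sum_empty, zero_add, ← q6, hzd, Function.update_self]
    have hUk : ∀ k, t < k → k ≤ π.l → ∑ j ∈ Finset.Ioc 0 k, ζ' (π'.p j)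
        = π.topSum ζ (k - 1) := by
      intro k hkt hkl
      rw [hU k (by omega) (by omega)]
      have e2 : ∑ j ∈ Finset.Ioc (t - 1) t, ζ' (π.p j) + ∑ j ∈ Finset.Ioc t (k - 1), ζ' (π.p j)
          = ∑ j ∈ Finset.Ioc (t - 1) (k - 1), ζ' (π.p j) :=
        Finset.sum_Ioc_consecutive _ (by omega) (by omega)
      have e3 : ∑ j ∈ Finset.Ioc t (k - 1), ζ' (π.p j)
          = ∑ j ∈ Finset.Ioc t (k - 1), ζ (π.p j) := by
        refine RzAux.sum_congr_Ioc (fun j hj1 hj2 => ?_)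
        exact hzw (hnw j (by omega) (by omega) (by omega) (by omega))
      have e4 : π.topSum ζ t + ∑ j ∈ Finset.Ioc t (k - 1), ζ (π.p j) = π.topSum ζ (k - 1) := by
        rw [GenPerm.topSum_Ioc, GenPerm.topSum_Ioc]
        exact Finset.sum_Ioc_consecutive _ (Nat.zero_le t) (by omega)
      rw [← e2, hsing, e3]
      linear_combination e4 - itt
    have hUtot : ∑ j ∈ Finset.Ioc 0 (π.l + 1), ζ' (π'.p j)
        = π.topSum ζ (π.l - 1) + (ζ (π.p π.l) - ζ (π.p π.size)) := by
      rw [hU (π.l + 1) (by omega) le_rfl]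
      rw [show π.l + 1 - 1 = π.l from by omega]
      have e0 : ∑ j ∈ Finset.Ioc (t - 1) π.l, ζ' (π.p j)
          = ∑ j ∈ Finset.Ioc (t - 1) (π.l - 1), ζ' (π.p j) + ζ' (π.p π.l) := by
        obtain ⟨l1, hl1⟩ : ∃ l1, π.l = l1 + 1 := ⟨π.l - 1, by omega⟩
        rw [hl1, Nat.add_sub_cancel, Finset.sum_Ioc_succ_top (by omega)]
      have e2 : ∑ j ∈ Finset.Ioc (t - 1) t, ζ' (π.p j)
            + ∑ j ∈ Finset.Ioc t (π.l - 1), ζ' (π.p j)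
          = ∑ j ∈ Finset.Ioc (t - 1) (π.l - 1), ζ' (π.p j) :=
        Finset.sum_Ioc_consecutive _ (by omega) (by omega)
      have e3 : ∑ j ∈ Finset.Ioc t (π.l - 1), ζ' (π.p j)
          = ∑ j ∈ Finset.Ioc t (π.l - 1), ζ (π.p j) := by
        refine RzAux.sum_congr_Ioc (fun j hj1 hj2 => ?_)
        exact hzw (hnw j (by omega) (by omega) (by omega) (by omega))
      have e4 : π.topSum ζ t + ∑ j ∈ Finset.Ioc t (π.l - 1), ζ (π.p j)
          = π.topSum ζ (π.l - 1) := by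
        rw [GenPerm.topSum_Ioc, GenPerm.topSum_Ioc]
        exact Finset.sum_Ioc_consecutive _ (Nat.zero_le t) (by omega)
      have e5 : ζ' (π.p π.l) = ζ (π.p π.l) - ζ (π.p π.size) := by
        rw [hzd, Function.update_self]
      rw [e0, ← e2, hsing, e3, e5]
      linear_combination e4 - itt
    have hV : ∀ k, k ≤ π.m - 1 → ∑ j ∈ Finset.Ioc 0 k, ζ' (π'.p (π.l + 1 + j))
        = π.botSum ζ k := by
      intro k hk
      refine RzAux.sum_congr_Ioc (fun j hj1 hj2 => ?_)
      rw [hC (π.l + 1 + j) (by omega) (by omega),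
        show π.l + 1 + j - 1 = π.l + j from by omega]
      exact hzw (hnw (π.l + j) (by omega) (by omega) (by omega) (by omega))
    refine ⟨hre, ?_, ?_, ?_⟩
    · intro k hk1 hk2
      rw [hl'] at hk2
      rw [GenPerm.topSum_Ioc]
      rcases lt_trichotomy k t with hkt | hkt | hkt
      · rw [hTk k hkt]
        exact htop k hk1 (by omega)
      · rw [hkt, hU t le_rfl (by omega), Finset.Ioc_self, Finset.sum_empty, add_zero]
        have i2 := congrArg Complex.im iBm
        have i3 := congrArg Complex.im iTl
        have i4 := congrArg Complex.im heq
        have i5 := congrArg Complex.im itt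
        simp only [Complex.add_im] at i2 i3 i4 i5 ⊢
        have s1 : 0 < (π.topSum ζ t).im := htop t q3 (by omega)
        have s2 : 0 ≤ (π.topSum ζ (π.l - 1)).im := hT0 (π.l - 1) (by omega)
        have s3 : (π.botSum ζ (π.m - 1)).im < 0 := hbot (π.m - 1) (by omega) le_rfl
        linarith
      · rw [hUk k hkt (by omega)]
        exact htop (k - 1) (by omega) (by omega)
    · intro k hk1 hk2
      rw [hm'] at hk2
      rw [GenPerm.botSum_Ioc, hl']
      rw [hV k (by omega)]
      exact hbot k hk1 (by omega)
    · rw [GenPerm.topSum_Ioc, GenPerm.botSum_Ioc, hl', hm']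
      rw [hUtot, hV (π.m - 1) le_rfl]
      linear_combination heq - iTl + iBm
private lemma rauzy_R1 {A : Type*} [DecidableEq A] (π π' : GenPerm A) (ζ : A → ℂ)
    (hζ : π.IsSuspension ζ)
    (hwin : (ζ (π.p π.l)).re < (ζ (π.p π.size)).re) (h : IsR1 π π') :
    π'.IsSuspension (Function.update ζ (π.p π.size) (ζ (π.p π.size) - ζ (π.p π.l))) := by
  obtain ⟨hpos, htop, hbot, heq⟩ := hζ
  have hsz : π.size = π.l + π.m := rfl
  set ζ' := Function.update ζ (π.p π.size) (ζ (π.p π.size) - ζ (π.p π.l)) with hzd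
  have hre : ∀ a, 0 < (ζ' a).re := by
    intro a
    rcases eq_or_ne a (π.p π.size) with rfl | ha
    · rw [hzd, Function.update_self, Complex.sub_re]
      linarith
    · rw [hzd, Function.update_of_ne ha]
      exact hpos a
  have hzw : ∀ {x : A}, x ≠ π.p π.size → ζ' x = ζ x := by
    intro x hx
    rw [hzd, Function.update_of_ne hx]
  have hT0 : ∀ k, k ≤ π.l - 1 → 0 ≤ (π.topSum ζ k).im := by
    intro k hk
    rcases Nat.eq_zero_or_pos k with rfl | hk1
    · simp [GenPerm.topSum_zero]
    · exact le_of_lt (htop k hk1 hk)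
  have hB0 : ∀ k, k ≤ π.m - 1 → (π.botSum ζ k).im ≤ 0 := by
    intro k hk
    rcases Nat.eq_zero_or_pos k with rfl | hk1
    · simp [GenPerm.botSum_zero]
    · exact le_of_lt (hbot k hk1 hk)
  have hl1 : 1 ≤ π.l := by
    rcases h with ⟨t, htwin, hle, _⟩ | ⟨t, htwin, hlt, ⟨x, y, hxy, hx1, hx2, _⟩, _⟩
    · have := htwin.2.2.1
      omega
    · omega
  have hm1 : 1 ≤ π.m := by
    rcases h with ⟨t, htwin, hle, hne, _⟩ | ⟨t, htwin, hlt, _⟩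
    · by_contra hm
      exact hne (congrArg π.p (show π.l = π.size from by omega))
    · have := htwin.2.2.2.1
      omega
  have iTl : π.topSum ζ π.l = π.topSum ζ (π.l - 1) + ζ (π.p π.l) := π.topSum_pred ζ hl1
  have iBm : π.botSum ζ π.m = π.botSum ζ (π.m - 1) + ζ (π.p π.size) := by
    have c := π.botSum_pred ζ hm1
    rwa [show π.l + π.m = π.size from rfl] at c
  rcases h with ⟨t, htwin, hle, hne, hl', hm', hB, hC, hA⟩ |
    ⟨t, htwin, hlt, ⟨x, y, hxy, hx1, hx2, hy1, hy2⟩, hl', hm', hC, hB, hA⟩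
  · -- R1, same type: σ(2d) = t ≤ l
    have q3 : 1 ≤ t := htwin.2.2.1
    have q6 : π.p π.size = π.p t := htwin.2.2.2.2.2
    have hnz : ∀ x, 1 ≤ x → x ≤ π.size → x ≠ π.size → x ≠ t → π.p x ≠ π.p π.size :=
      fun x a b c d => π.twin_ne htwin a b c d
    have htl : t ≤ π.l - 1 := by
      have : t ≠ π.l := fun h' => hne (by rw [q6, h'])
      omega
    have itT : π.topSum ζ t = π.topSum ζ (t - 1) + ζ (π.p π.size) := by
      have c := π.topSum_pred ζ q3
      rwa [← q6] at c
    have hP1 : ∑ j ∈ Finset.Ioc 0 t, ζ' (π'.p j)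
        = π.topSum ζ (t - 1) + (ζ (π.p π.size) - ζ (π.p π.l)) := by
      obtain ⟨t1, ht1⟩ : ∃ t1, t = t1 + 1 := ⟨t - 1, by omega⟩
      subst ht1
      rw [Finset.sum_Ioc_succ_top (Nat.zero_le _), Nat.add_sub_cancel]
      have e1 : ∑ j ∈ Finset.Ioc 0 t1, ζ' (π'.p j) = π.topSum ζ t1 := by
        refine RzAux.sum_congr_Ioc (fun j hj1 hj2 => ?_)
        rw [hA j hj1 (by omega) (Or.inl (by omega))]
        exact hzw (hnz j hj1 (by omega) (by omega) (by omega))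
      have e2 : π'.p (t1 + 1) = π.p (t1 + 1) :=
        hA (t1 + 1) (by omega) (by omega) (Or.inl le_rfl)
      rw [e1, e2, ← q6, hzd, Function.update_self]
    have hQ1 : ∀ k, t < k → k ≤ π.l → ∑ j ∈ Finset.Ioc 0 k, ζ' (π'.p j)
        = π.topSum ζ (k - 1) := by
      intro k hkt hkl
      have h3sum := RzAux.sum_three (fun j => ζ' (π'.p j)) (fun j => ζ' (π.p j))
        (ζ (π.p π.l)) t k hkt
        (fun j hj1 hj2 => by
          show ζ' (π'.p j) = ζ' (π.p j)
          rw [hA j hj1 (by omega) (Or.inl hj2)])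
        (by
          show ζ' (π'.p (t + 1)) = ζ (π.p π.l)
          rw [hB]
          exact hzw hne)
        (fun j hj1 hj2 => by
          show ζ' (π'.p j) = ζ' (π.p (j - 1))
          rw [hC j hj1 (by omega)])
      rw [h3sum]
      have e1 : ∑ j ∈ Finset.Ioc 0 t, ζ' (π.p j) = ∑ j ∈ Finset.Ioc 0 t, ζ' (π'.p j) := by
        refine RzAux.sum_congr_Ioc (fun j hj1 hj2 => ?_)
        rw [hA j hj1 (by omega) (Or.inl hj2)]
      have e3 : ∑ j ∈ Finset.Ioc t (k - 1), ζ' (π.p j)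
          = ∑ j ∈ Finset.Ioc t (k - 1), ζ (π.p j) := by
        refine RzAux.sum_congr_Ioc (fun j hj1 hj2 => ?_)
        exact hzw (hnz j (by omega) (by omega) (by omega) (by omega))
      have e4 : π.topSum ζ t + ∑ j ∈ Finset.Ioc t (k - 1), ζ (π.p j)
          = π.topSum ζ (k - 1) := by
        rw [GenPerm.topSum_Ioc, GenPerm.topSum_Ioc]
        exact Finset.sum_Ioc_consecutive _ (Nat.zero_le t) (by omega)
      rw [e1, hP1, e3]
      linear_combination e4 - itT
    have hV1 : ∀ k, k ≤ π.m - 1 → ∑ j ∈ Finset.Ioc 0 k, ζ' (π'.p (π.l + j))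
        = π.botSum ζ k := by
      intro k hk
      refine RzAux.sum_congr_Ioc (fun j hj1 hj2 => ?_)
      rw [hA (π.l + j) (by omega) (by omega) (Or.inr (by omega))]
      exact hzw (hnz (π.l + j) (by omega) (by omega) (by omega) (by omega))
    have hVm : ∑ j ∈ Finset.Ioc 0 π.m, ζ' (π'.p (π.l + j))
        = π.botSum ζ (π.m - 1) + (ζ (π.p π.size) - ζ (π.p π.l)) := by
      obtain ⟨m1, hm1'⟩ : ∃ m1, π.m = m1 + 1 := ⟨π.m - 1, by omega⟩
      rw [hm1', Finset.sum_Ioc_succ_top (Nat.zero_le _), Nat.add_sub_cancel]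
      have e1 := hV1 m1 (by omega)
      have e2 : π'.p (π.l + (m1 + 1)) = π.p π.size := by
        rw [show π.l + (m1 + 1) = π.size from by omega]
        exact hA π.size (by omega) le_rfl (Or.inr (by omega))
      rw [e1, e2, hzd, Function.update_self]
    refine ⟨hre, ?_, ?_, ?_⟩
    · intro k hk1 hk2
      rw [hl'] at hk2
      rw [GenPerm.topSum_Ioc]
      rcases lt_trichotomy k t with hkt | hkt | hkt
      · have e : ∑ j ∈ Finset.Ioc 0 k, ζ' (π'.p j) = π.topSum ζ k := by
          refine RzAux.sum_congr_Ioc (fun j hj1 hj2 => ?_)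
          rw [hA j hj1 (by omega) (Or.inl (by omega))]
          exact hzw (hnz j hj1 (by omega) (by omega) (by omega))
        rw [e]
        exact htop k hk1 hk2
      · rw [hkt, hP1]
        have i2 := congrArg Complex.im iBm
        have i3 := congrArg Complex.im iTl
        have i4 := congrArg Complex.im heq
        have i5 := congrArg Complex.im itT
        simp only [Complex.add_im, Complex.sub_im] at i2 i3 i4 i5 ⊢
        have s1 : 0 < (π.topSum ζ (π.l - 1)).im := htop (π.l - 1) (by omega) le_rfl
        have s2 : 0 ≤ (π.topSum ζ (t - 1)).im := hT0 (t - 1) (by omega)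
        have s3 : (π.botSum ζ (π.m - 1)).im ≤ 0 := hB0 (π.m - 1) (by omega)
        linarith
      · rw [hQ1 k hkt (by omega)]
        exact htop (k - 1) (by omega) (by omega)
    · intro k hk1 hk2
      rw [hm'] at hk2
      rw [GenPerm.botSum_Ioc, hl', hV1 k (by omega)]
      exact hbot k hk1 hk2
    · rw [GenPerm.topSum_Ioc, GenPerm.botSum_Ioc, hl', hm']
      rw [hQ1 π.l (by omega) le_rfl, hVm]
      linear_combination heq - iTl + iBm
  · -- R1, type change: σ(2d) = t > l
    have q4 : t ≤ π.size := htwin.2.2.2.1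
    have q6 : π.p π.size = π.p t := htwin.2.2.2.2.2
    have tsize : π.size ≠ t := htwin.2.2.2.2.1
    have hnz : ∀ x, 1 ≤ x → x ≤ π.size → x ≠ π.size → x ≠ t → π.p x ≠ π.p π.size :=
      fun x a b c d => π.twin_ne htwin a b c d
    set s := t - π.l with hsdef
    have hss : t = π.l + s := by omega
    have hsm : 1 ≤ s ∧ s ≤ π.m - 1 := by omega
    have hwz : π.p π.l ≠ π.p π.size := hnz π.l hl1 (by omega) (by omega) (by omega)
    have izs : π.botSum ζ s = π.botSum ζ (s - 1) + ζ (π.p π.size) := by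
      have c := π.botSum_pred ζ hsm.1
      rwa [show π.l + s = t from hss.symm, ← q6] at c
    have hT2 : ∀ k, k ≤ π.l - 1 → ∑ j ∈ Finset.Ioc 0 k, ζ' (π'.p j) = π.topSum ζ k := by
      intro k hk
      refine RzAux.sum_congr_Ioc (fun j hj1 hj2 => ?_)
      rw [hA j hj1 (by omega) (Or.inl (by omega))]
      exact hzw (hnz j hj1 (by omega) (by omega) (by omega))
    have hW : ∀ k, s ≤ k → k ≤ π.m + 1 →
        ∑ j ∈ Finset.Ioc 0 k, ζ' (π'.p (π.l - 1 + j))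
          = π.botSum ζ (s - 1) + ζ (π.p π.l)
            + ∑ j ∈ Finset.Ioc (s - 1) (k - 1), ζ' (π.p (π.l + j)) := by
      intro k hks hkm
      have h3sum := RzAux.sum_three (fun j => ζ' (π'.p (π.l - 1 + j)))
        (fun j => ζ' (π.p (π.l + j))) (ζ (π.p π.l)) (s - 1) k (by omega)
        (fun j hj1 hj2 => by
          show ζ' (π'.p (π.l - 1 + j)) = ζ' (π.p (π.l + j))
          rw [hC (π.l - 1 + j) (by omega) (by omega),
            show π.l - 1 + j + 1 = π.l + j from by omega])
        (by
          show ζ' (π'.p (π.l - 1 + (s - 1 + 1))) = ζ (π.p π.l)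
          rw [show π.l - 1 + (s - 1 + 1) = t - 1 from by omega, hB]
          exact hzw hwz)
        (fun j hj1 hj2 => by
          show ζ' (π'.p (π.l - 1 + j)) = ζ' (π.p (π.l + (j - 1)))
          rw [hA (π.l - 1 + j) (by omega) (by omega) (Or.inr (by omega)),
            show π.l - 1 + j = π.l + (j - 1) from by omega])
      rw [h3sum]
      have e1 : ∑ j ∈ Finset.Ioc 0 (s - 1), ζ' (π.p (π.l + j)) = π.botSum ζ (s - 1) := by
        refine RzAux.sum_congr_Ioc (fun j hj1 hj2 => ?_)
        exact hzw (hnz (π.l + j) (by omega) (by omega) (by omega) (by omega))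
      rw [e1]
    have esing : ∑ j ∈ Finset.Ioc (s - 1) s, ζ' (π.p (π.l + j))
        = ζ (π.p π.size) - ζ (π.p π.l) := by
      obtain ⟨s1, hs1⟩ : ∃ s1, s = s1 + 1 := ⟨s - 1, by omega⟩
      rw [hs1, Nat.add_sub_cancel, Finset.sum_Ioc_succ_top le_rfl, Finset.Ioc_self,
        Finset.sum_empty, zero_add, show π.l + (s1 + 1) = t from by omega, ← q6,
        hzd, Function.update_self]
    have hQ2 : ∀ k, s < k → k ≤ π.m →
        ∑ j ∈ Finset.Ioc 0 k, ζ' (π'.p (π.l - 1 + j)) = π.botSum ζ (k - 1) := by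
      intro k hks hkm
      rw [hW k (by omega) (by omega)]
      have e2 : ∑ j ∈ Finset.Ioc (s - 1) s, ζ' (π.p (π.l + j))
            + ∑ j ∈ Finset.Ioc s (k - 1), ζ' (π.p (π.l + j))
          = ∑ j ∈ Finset.Ioc (s - 1) (k - 1), ζ' (π.p (π.l + j)) :=
        Finset.sum_Ioc_consecutive _ (by omega) (by omega)
      have e3 : ∑ j ∈ Finset.Ioc s (k - 1), ζ' (π.p (π.l + j))
          = ∑ j ∈ Finset.Ioc s (k - 1), ζ (π.p (π.l + j)) := by
        refine RzAux.sum_congr_Ioc (fun j hj1 hj2 => ?_)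
        exact hzw (hnz (π.l + j) (by omega) (by omega) (by omega) (by omega))
      have e4 : π.botSum ζ s + ∑ j ∈ Finset.Ioc s (k - 1), ζ (π.p (π.l + j))
          = π.botSum ζ (k - 1) := by
        rw [GenPerm.botSum_Ioc, GenPerm.botSum_Ioc]
        exact Finset.sum_Ioc_consecutive _ (Nat.zero_le s) (by omega)
      rw [← e2, esing, e3]
      linear_combination e4 - izs
    have hWtot : ∑ j ∈ Finset.Ioc 0 (π.m + 1), ζ' (π'.p (π.l - 1 + j))
        = π.botSum ζ (π.m - 1) + (ζ (π.p π.size) - ζ (π.p π.l)) := by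
      rw [hW (π.m + 1) (by omega) le_rfl, Nat.add_sub_cancel]
      have e2 : ∑ j ∈ Finset.Ioc (s - 1) s, ζ' (π.p (π.l + j))
            + ∑ j ∈ Finset.Ioc s π.m, ζ' (π.p (π.l + j))
          = ∑ j ∈ Finset.Ioc (s - 1) π.m, ζ' (π.p (π.l + j)) :=
        Finset.sum_Ioc_consecutive _ (by omega) (by omega)
      obtain ⟨m1, hm1'⟩ : ∃ m1, π.m = m1 + 1 := ⟨π.m - 1, by omega⟩
      have e5 : ∑ j ∈ Finset.Ioc s π.m, ζ' (π.p (π.l + j))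
          = ∑ j ∈ Finset.Ioc s m1, ζ (π.p (π.l + j)) + (ζ (π.p π.size) - ζ (π.p π.l)) := by
        rw [hm1', Finset.sum_Ioc_succ_top (by omega)]
        have e6 : π.p (π.l + (m1 + 1)) = π.p π.size := by
          rw [show π.l + (m1 + 1) = π.size from by omega]
        have e7 : ∑ j ∈ Finset.Ioc s m1, ζ' (π.p (π.l + j))
            = ∑ j ∈ Finset.Ioc s m1, ζ (π.p (π.l + j)) := by
          refine RzAux.sum_congr_Ioc (fun j hj1 hj2 => ?_)
          exact hzw (hnz (π.l + j) (by omega) (by omega) (by omega) (by omega))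
        rw [e6, e7, hzd, Function.update_self]
      have e4 : π.botSum ζ s + ∑ j ∈ Finset.Ioc s m1, ζ (π.p (π.l + j))
          = π.botSum ζ m1 := by
        rw [GenPerm.botSum_Ioc, GenPerm.botSum_Ioc]
        exact Finset.sum_Ioc_consecutive _ (Nat.zero_le s) (by omega)
      rw [← e2, esing, e5, show π.m - 1 = m1 from by omega]
      linear_combination e4 - izs
    refine ⟨hre, ?_, ?_, ?_⟩
    · intro k hk1 hk2
      rw [hl'] at hk2
      rw [GenPerm.topSum_Ioc, hT2 k (by omega)]
      exact htop k hk1 (by omega)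
    · intro k hk1 hk2
      rw [hm'] at hk2
      rw [GenPerm.botSum_Ioc, hl']
      rcases lt_trichotomy k s with hks | hks | hks
      · have e : ∑ j ∈ Finset.Ioc 0 k, ζ' (π'.p (π.l - 1 + j)) = π.botSum ζ k := by
          refine RzAux.sum_congr_Ioc (fun j hj1 hj2 => ?_)
          rw [hC (π.l - 1 + j) (by omega) (by omega),
            show π.l - 1 + j + 1 = π.l + j from by omega]
          exact hzw (hnz (π.l + j) (by omega) (by omega) (by omega) (by omega))
        rw [e]
        exact hbot k hk1 (by omega)
      · rw [hks, hW s le_rfl (by omega), Finset.Ioc_self, Finset.sum_empty, add_zero]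
        have i2 := congrArg Complex.im iBm
        have i3 := congrArg Complex.im iTl
        have i4 := congrArg Complex.im heq
        have i6 := congrArg Complex.im izs
        simp only [Complex.add_im, Complex.sub_im] at i2 i3 i4 i6 ⊢
        have s1 : (π.botSum ζ s).im < 0 := hbot s hsm.1 hsm.2
        have s2 : (π.botSum ζ (π.m - 1)).im ≤ 0 := hB0 (π.m - 1) (by omega)
        have s3 : 0 ≤ (π.topSum ζ (π.l - 1)).im := hT0 (π.l - 1) (by omega)
        linarith
      · rw [hQ2 k hks (by omega)]
        exact hbot (k - 1) (by omega) (by omega)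
    · rw [GenPerm.topSum_Ioc, GenPerm.botSum_Ioc, hl', hm']
      rw [hT2 (π.l - 1) le_rfl, hWtot]
      linear_combination heq - iTl + iBm
/-- The Rauzy–Veech induction on suspension data: if `ζ` is a suspension
data for `π` with `Re ζ_{π(l)} ≠ Re ζ_{π(2d)}`, and `R_ε(π)` is defined for the type
`ε` of the data, then the modified data `ζ'` (subtracting the loser from the winner) is a
suspension data for `R_ε(π)`. -/
theorem rauzy_suspension {A : Type*} [DecidableEq A] (π π' : GenPerm A) (ζ : A → ℂ)
    (hζ : π.IsSuspension ζ)
    (hne : (ζ (π.p π.l)).re ≠ (ζ (π.p π.size)).re) :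
    ((ζ (π.p π.size)).re < (ζ (π.p π.l)).re → IsR0 π π' →
      π'.IsSuspension
        (Function.update ζ (π.p π.l) (ζ (π.p π.l) - ζ (π.p π.size)))) ∧
    ((ζ (π.p π.l)).re < (ζ (π.p π.size)).re → IsR1 π π' →
      π'.IsSuspension
        (Function.update ζ (π.p π.size) (ζ (π.p π.size) - ζ (π.p π.l)))) := by
  constructor
  · intro hlt h0
    exact rauzy_R0 π π' ζ hζ hlt h0
  · intro hlt h1
    exact rauzy_R1 π π' ζ hζ hlt h1
end
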